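/- arXiv:2510.20241 — 6 statements merged into one kernel-verified Lean document; each statement's English description precedes it below -/
import Mathlib

section
/- Let $(X,Y) \sim P_{X,Y} = P_X \circ P_{Y|X}$ on finite sets $\mathcal{X}, \mathcal{Y}$, let $G_X \sim \mathrm{NM}(P_X)$ and $G_{Y|X} \sim \mathrm{NM}(P_{Y|X})$ be independent. Then the random vector $G_X \circ P_{Y|X} + \sqrt{P_X} \circ G_{Y|X} \in \mathbb{R}^{\mathcal{X}\times\mathcal{Y}}$, with entries $(x,y) \mapsto G_X(x) P_{Y|X}(y|x) + \sqrt{P_X(x)}\, G_{Y|X}(y|x)$, has distribution $\mathrm{NM}(P_{X,Y})$. -/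
open MeasureTheory ProbabilityTheory

/-- The covariance matrix of the Gaussian-multinomial distribution `NM(P)`. -/
noncomputable def nmCov {X : Type*} [DecidableEq X] (P : X → ℝ) : X → X → ℝ :=
  fun x x' => if x = x' then P x * (1 - P x) else -(P x * P x')

/-- The covariance matrix of the conditional Gaussian-multinomial distribution
`NM(P_{Y|X})` : the stacked vector `(V_x)_x` with `V_x ∼ NM(P_{Y|X}(·|x))`
independent across `x`, hence a block-diagonal covariance. -/
noncomputable def nmCovCond {X Y : Type*} [DecidableEq X] [DecidableEq Y]
    (Q : X → Y → ℝ) : (X × Y) → (X × Y) → ℝ :=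
  fun p q => if p.1 = q.1 then nmCov (Q p.1) p.2 q.2 else 0

/-- `G` is a centered Gaussian random vector with covariance matrix `S`. -/
def IsCenteredGaussianVec {Ω X : Type*} [Fintype X] [MeasurableSpace Ω]
    (μ : Measure Ω) (G : Ω → X → ℝ) (S : X → X → ℝ) : Prop :=
  ∀ ℓ : X → ℝ, Measure.map (fun ω => ∑ x, ℓ x * G ω x) μ =
    gaussianReal 0 (Real.toNNReal (∑ x, ∑ x', ℓ x * S x x' * ℓ x'))

lemma quad_nmCov {X : Type*} [Fintype X] [DecidableEq X] (P ℓ : X → ℝ) :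
    ∑ x, ∑ x', ℓ x * nmCov P x x' * ℓ x' =
      ∑ x, ℓ x * ℓ x * P x - (∑ x, ℓ x * P x) * (∑ x, ℓ x * P x) := by
  have h : ∀ x x', ℓ x * nmCov P x x' * ℓ x' =
      (if x' = x then ℓ x * ℓ x * P x else 0) - (ℓ x * P x) * (ℓ x' * P x') := by
    intro x x'
    unfold nmCov
    by_cases hx : x = x'
    · subst hx; rw [if_pos rfl, if_pos rfl]; ring
    · rw [if_neg hx, if_neg (Ne.symm hx)]; ring
  simp_rw [h, Finset.sum_sub_distrib, Finset.sum_ite_eq', Finset.mem_univ, if_true]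
  rw [Finset.sum_mul_sum]

lemma quad_nmCovCond {X Y : Type*} [Fintype X] [Fintype Y] [DecidableEq X] [DecidableEq Y]
    (Q : X → Y → ℝ) (b : X × Y → ℝ) :
    ∑ p, ∑ q, b p * nmCovCond Q p q * b q =
      ∑ x, ∑ y, ∑ y', b (x, y) * nmCov (Q x) y y' * b (x, y') := by
  simp_rw [Fintype.sum_prod_type, nmCovCond]
  refine Finset.sum_congr rfl fun x _ => Finset.sum_congr rfl fun y _ => ?_
  rw [Finset.sum_comm]
  refine Finset.sum_congr rfl fun y' _ => ?_
  simp [mul_ite, ite_mul, Finset.sum_ite_eq]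

/-- if `G_X ∼ NM(P_X)` and `G_{Y|X} ∼ NM(P_{Y|X})` are independent
(i.e. their stacked vector is jointly centered Gaussian with block-diagonal
covariance), then `G_X ∘ P_{Y|X} + √P_X ∘ G_{Y|X}`, with entries
`(x,y) ↦ G_X x * P_{Y|X}(y|x) + √(P_X x) * G_{Y|X}(y|x)`, has distribution
`NM(P_{X,Y})` where `P_{X,Y}(x,y) = P_X x * P_{Y|X}(y|x)`. -/
theorem nm_semidirect_decomposition {Ω X Y : Type*} [Fintype X] [Fintype Y]
    [DecidableEq X] [DecidableEq Y] [MeasurableSpace Ω]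
    (μ : Measure Ω) [IsProbabilityMeasure μ]
    (PX : X → ℝ) (hPX0 : ∀ x, 0 ≤ PX x) (hPX1 : ∑ x, PX x = 1)
    (Q : X → Y → ℝ) (hQ0 : ∀ x y, 0 ≤ Q x y) (hQ1 : ∀ x, ∑ y, Q x y = 1)
    (GX : Ω → X → ℝ) (GYX : Ω → X × Y → ℝ)
    (hjoint : IsCenteredGaussianVec μ (fun ω => Sum.elim (GX ω) (GYX ω))
      (fun i j => match i, j with
        | Sum.inl x, Sum.inl x' => nmCov PX x x'
        | Sum.inr p, Sum.inr q => nmCovCond Q p q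
        | _, _ => 0)) :
    IsCenteredGaussianVec μ
      (fun ω (p : X × Y) => GX ω p.1 * Q p.1 p.2 + Real.sqrt (PX p.1) * GYX ω p)
      (nmCov (fun p : X × Y => PX p.1 * Q p.1 p.2)) := by
  intro ℓ
  set a : X → ℝ := fun x => ∑ y, ℓ (x, y) * Q x y with ha
  set ℓ' : X ⊕ (X × Y) → ℝ := Sum.elim a (fun p => Real.sqrt (PX p.1) * ℓ p) with hℓ'
  have hmap : (fun ω => ∑ p : X × Y,
        ℓ p * (GX ω p.1 * Q p.1 p.2 + Real.sqrt (PX p.1) * GYX ω p))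
      = fun ω => ∑ i, ℓ' i * Sum.elim (GX ω) (GYX ω) i := by
    funext ω
    rw [Fintype.sum_sum_type]
    simp only [hℓ', Sum.elim_inl, Sum.elim_inr, ha]
    simp_rw [mul_add, Finset.sum_add_distrib, Fintype.sum_prod_type, Finset.sum_mul]
    congr 1
    · exact Finset.sum_congr rfl fun x _ => Finset.sum_congr rfl fun y _ => by ring
    · exact Finset.sum_congr rfl fun x _ => Finset.sum_congr rfl fun y _ => by ring
  have hvar : (∑ i, ∑ j, ℓ' i * (match i, j with
        | Sum.inl x, Sum.inl x' => nmCov PX x x'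
        | Sum.inr p, Sum.inr q => nmCovCond Q p q
        | _, _ => 0) * ℓ' j)
      = ∑ p, ∑ q, ℓ p * nmCov (fun p : X × Y => PX p.1 * Q p.1 p.2) p q * ℓ q := by
    simp only [Fintype.sum_sum_type, hℓ', Sum.elim_inl, Sum.elim_inr, mul_zero, zero_mul,
      Finset.sum_const_zero, add_zero, zero_add]
    rw [quad_nmCov, quad_nmCov, quad_nmCovCond]
    have hB : ∀ x, (∑ y, ∑ y', (Real.sqrt (PX (x, y).1) * ℓ (x, y)) * nmCov (Q x) y y' *
          (Real.sqrt (PX (x, y').1) * ℓ (x, y')))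
        = PX x * ((∑ y, ℓ (x, y) * ℓ (x, y) * Q x y) - a x * a x) := by
      intro x
      have hs : Real.sqrt (PX x) * Real.sqrt (PX x) = PX x := Real.mul_self_sqrt (hPX0 x)
      have : ∀ y y', (Real.sqrt (PX (x, y).1) * ℓ (x, y)) * nmCov (Q x) y y' *
            (Real.sqrt (PX (x, y').1) * ℓ (x, y'))
          = PX x * (ℓ (x, y) * nmCov (Q x) y y' * ℓ (x, y')) := by
        intro y y'; simp only []
        linear_combination ℓ (x, y) * nmCov (Q x) y y' * ℓ (x, y') * hs
      simp_rw [this, ← Finset.mul_sum]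
      rw [quad_nmCov (Q x) (fun y => ℓ (x, y))]
    simp_rw [hB]
    have h1 : ∑ x, PX x * ∑ y, ℓ (x, y) * ℓ (x, y) * Q x y
        = ∑ p : X × Y, ℓ p * ℓ p * (PX p.1 * Q p.1 p.2) := by
      rw [Fintype.sum_prod_type]
      exact Finset.sum_congr rfl fun x _ => by
        rw [Finset.mul_sum]; exact Finset.sum_congr rfl fun y _ => by ring
    have h2 : ∑ x, a x * PX x = ∑ p : X × Y, ℓ p * (PX p.1 * Q p.1 p.2) := by
      rw [Fintype.sum_prod_type, ha]
      exact Finset.sum_congr rfl fun x _ => by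
        simp only []; rw [Finset.sum_mul]; exact Finset.sum_congr rfl fun y _ => by ring
    simp_rw [mul_sub, Finset.sum_sub_distrib, h1]
    have h3 : ∑ x, PX x * (a x * a x) = ∑ x, a x * a x * PX x :=
      Finset.sum_congr rfl fun x _ => by ring
    rw [h3, ← h2]
    ring
  rw [hmap, hjoint ℓ']
  exact congrArg (fun r : ℝ => gaussianReal 0 r.toNNReal) hvar
end

section
/- (Discrete Poisson matching lemma.) Let $P_{X,U,Y} = P_X \circ P_{U|X} \circ P_{Y|X,U}$ be a joint pmf on finite sets $\mathcal{X} \times \mathcal{U} \times \mathcal{Y}$. Let $(T_u)_{u \in \mathcal{U}}$ be i.i.d. $\mathrm{Exp}(1)$ random variables independent of everything else. Let $X \sim P_X$, $U = \mathrm{argmin}_u\, T_u / P_{U|X}(u|X)$, $Y \mid (X,U) \sim P_{Y|X,U}$, and $\hat{U} = \mathrm{argmin}_u\, T_u / P_{U|Y}(u|Y)$ where $P_{U|Y}$ is the conditional distribution induced by $P_{X,U,Y}$. Then $(X,U,Y) \sim P_{X,U,Y}$, and almost surely $\mathbb{P}(U \neq \hat{U} \mid X, U, Y) \le 2^{\iota_{U;X}(U;X)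 - \iota_{U;Y}(U;Y)}$, where $\iota_{U;X}(u;x) = \log_2 \frac{P_{U|X}(u|x)}{P_U(u)}$ and $\iota_{U;Y}(u;y) = \log_2 \frac{P_{U|Y}(u|y)}{P_U(u)}$. -/
/-!
Both `U` and `Û` are read off the same exponential clocks `T`. Conditioning on `T_u = t`, the
other clocks independently exceed `a_v t` with probability `e^{-a_v t}`, so
`ℙ(T_v > a_v T_u ∀ v ≠ u) = 1 / (1 + ∑ a_v)`. With `a_v = P_{U|X}(v|x) / P_{U|X}(u|x)` this says
that `u` minimises `T_v / P_{U|X}(v|x)` with probability `P_{U|X}(u|x)`, independently of `X`,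
which gives the joint law. A mismatch `Û = v ≠ u` forces
`T_v ≤ (P_{U|Y}(v|y) / P_{U|Y}(u|y)) T_u`; the same conditioning bounds the probability of this
together with `U = u` by `(P_{U|Y}(v|y) / P_{U|Y}(u|y)) P_{U|X}(u|x)²`, and summing over `v ≠ u`
leaves at most `P_{U|X}(u|x)² / P_{U|Y}(u|y) = 2^{ι_{U;X}(u;x) - ι_{U;Y}(u;y)} P_{U|X}(u|x)`.
-/

open MeasureTheory ProbabilityTheory Real Set
open scoped Nat

namespace ProbabilityTheory

variable {r : ℝ}

lemma ae_expMeasure_pos (hr : 0 < r) : ∀ᵐ t ∂expMeasure r, 0 < t := by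
  have := isProbabilityMeasure_expMeasure hr
  rw [ae_iff]
  simp only [not_lt]
  change expMeasure r (Iic 0) = 0
  rw [← ofReal_cdf, cdf_expMeasure_eq hr]
  simp

lemma expMeasure_Ioi (hr : 0 < r) {s : ℝ} (hs : 0 ≤ s) :
    expMeasure r (Ioi s) = ENNReal.ofReal (exp (-(r * s))) := by
  have := isProbabilityMeasure_expMeasure hr
  rw [← compl_Iic, prob_compl_eq_one_sub measurableSet_Iic, ← ofReal_cdf, cdf_expMeasure_eq hr,
    if_pos hs, ← ENNReal.ofReal_one, ← ENNReal.ofReal_sub _ (sub_nonneg.mpr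
      (exp_le_one_iff.mpr (neg_nonpos.mpr (mul_nonneg hr.le hs)))), sub_sub_cancel]

lemma expMeasure_Ioc_le (hr : 0 ≤ r) (a b : ℝ) :
    expMeasure r (Ioc a b) ≤ ENNReal.ofReal (r * exp (-(r * a)) * (b - a)) := by
  calc expMeasure r (Ioc a b) = ∫⁻ t in Ioc a b, exponentialPDF r t :=
        withDensity_apply _ measurableSet_Ioc
    _ ≤ ∫⁻ _ in Ioc a b, ENNReal.ofReal (r * exp (-(r * a))) := by
        refine setLIntegral_mono measurable_const fun t ht => ?_
        rw [exponentialPDF_eq]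
        refine ENNReal.ofReal_le_ofReal ?_
        split_ifs
        · gcongr
          exact ht.1.le
        · positivity
    _ = ENNReal.ofReal (r * exp (-(r * a)) * (b - a)) := by
        rw [setLIntegral_const, Real.volume_Ioc, ← ENNReal.ofReal_mul (by positivity)]

/-- Times the `Exp(r)` density, the integrand is a multiple of the `Gamma(n + 1, r + c)` density. -/
lemma lintegral_pow_mul_exp_neg_mul_expMeasure (hr : 0 < r) {c : ℝ} (hc : 0 ≤ c) (n : ℕ) :
    ∫⁻ t, ENNReal.ofReal (t ^ n * exp (-(c * t))) ∂expMeasure r =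
      ENNReal.ofReal (r * n ! / (r + c) ^ (n + 1)) := by
  have hrc : 0 < r + c := by linarith
  have hpdf : ∀ t, exponentialPDF r t * ENNReal.ofReal (t ^ n * exp (-(c * t))) =
      ENNReal.ofReal (r * n ! / (r + c) ^ (n + 1)) * gammaPDF (n + 1) (r + c) t := by
    intro t
    rw [exponentialPDF_eq, gammaPDF_eq]
    split_ifs with ht
    · rw [← ENNReal.ofReal_mul (by positivity), ← ENNReal.ofReal_mul (by positivity)]
      congr 1
      rw [add_sub_cancel_right, rpow_natCast, ← Nat.cast_add_one, rpow_natCast, Nat.cast_add_one,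
        Gamma_nat_eq_factorial, show -((r + c) * t) = -(r * t) + -(c * t) by ring, exp_add]
      field_simp
    · simp
  rw [show expMeasure r = volume.withDensity (exponentialPDF r) from rfl,
    lintegral_withDensity_eq_lintegral_mul _ (f := exponentialPDF r)
      (measurable_exponentialPDFReal r).ennreal_ofReal (by fun_prop)]
  simp only [Pi.mul_apply, hpdf]
  rw [lintegral_const_mul _ (f := gammaPDF (n + 1) (r + c))
      (measurable_gammaPDFReal _ (r + c)).ennreal_ofReal,
    lintegral_gammaPDF_eq_one (by positivity) hrc, mul_one]

end ProbabilityTheory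

namespace MeasureTheory.Measure

lemma pi_setOf_forall_ne_mem_eq_lintegral {ι α : Type*} [Fintype ι] [DecidableEq ι]
    [MeasurableSpace α] (ν : Measure α) [SigmaFinite ν] (u : ι) (I : ι → α → Set α)
    (hI : ∀ v, MeasurableSet {p : α × α | p.2 ∈ I v p.1}) :
    Measure.pi (fun _ : ι => ν) {f | ∀ v, v ≠ u → f v ∈ I v (f u)} =
      ∫⁻ t, ∏ v ∈ Finset.univ.erase u, ν (I v t) ∂ν := by
  have : Unique {v : ι // v = u} := ⟨⟨⟨u, rfl⟩⟩, fun v => Subtype.ext v.2⟩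
  let S : Set (({v : ι // v = u} → α) × ({v : ι // ¬v = u} → α)) :=
    {g | ∀ w : {v : ι // ¬v = u}, g.2 w ∈ I w.1 (g.1 ⟨u, rfl⟩)}
  have hS : MeasurableSet S := by
    simp only [S, Set.ofPred_forall]
    exact MeasurableSet.iInter fun w => (hI w.1).preimage
      (f := fun g : ({v : ι // v = u} → α) × ({v : ι // ¬v = u} → α) => (g.1 ⟨u, rfl⟩, g.2 w))
      (by fun_prop)
  have hpre : MeasurableEquiv.piEquivPiSubtypeProd (fun _ : ι => α) (· = u) ⁻¹' S =
      {f | ∀ v, v ≠ u → f v ∈ I v (f u)} := by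
    ext f
    exact ⟨fun hf v hv => hf ⟨v, hv⟩, fun hf w => hf w.1 w.2⟩
  have hslice : ∀ g : {v : ι // v = u} → α,
      Measure.pi (fun _ : {v : ι // ¬v = u} => ν) (Prod.mk g ⁻¹' S) =
        ∏ v ∈ Finset.univ.erase u, ν (I v (g ⟨u, rfl⟩)) := by
    intro g
    have : Prod.mk g ⁻¹' S = Set.univ.pi fun w : {v : ι // ¬v = u} => I w.1 (g ⟨u, rfl⟩) := by
      ext h
      simp [S]
    rw [this, Measure.pi_pi]
    exact (Finset.prod_subtype _ (fun v => by simp) (fun v => ν (I v (g ⟨u, rfl⟩)))).symm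
  have hmeas : Measurable fun t => ∏ v ∈ Finset.univ.erase u, ν (I v t) :=
    Finset.measurable_prod _ fun v _ => measurable_measure_prodMk_left (hI v)
  rw [← hpre, (measurePreserving_piEquivPiSubtypeProd (fun _ : ι => ν) (· = u)).measure_preimage
    hS.nullMeasurableSet, Measure.prod_apply hS]
  simp_rw [hslice]
  rw [← (measurePreserving_funUnique ν {v : ι // v = u}).lintegral_comp hmeas]
  congr 1
  · congr 1
    exact Subsingleton.elim _ _
  · funext g
    exact congrArg (fun t => ∏ v ∈ Finset.univ.erase u, ν (I v t))
      (congrArg g (Subsingleton.elim _ _))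

end MeasureTheory.Measure

namespace PoissonMatching

/-- The functions `f` for which `v ↦ f v / p v` has its unique minimum at `u`, with the convention
`f v / 0 = ∞`; the ratios are compared cross-multiplied. -/
def argminSet {ι : Type*} (p : ι → ℝ) (u : ι) : Set (ι → ℝ) :=
  {f | ∀ v, v ≠ u → p v * f u < p u * f v}

section Race

variable {ι : Type*} {r : ℝ}

lemma eq_of_mem_argminSet {p f : ι → ℝ} {u u' : ι} (h : f ∈ argminSet p u)
    (h' : f ∈ argminSet p u') : u = u' := by
  by_contra hne
  exact (h u' (Ne.symm hne)).asymm (h' u hne)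

lemma argminSet_eq_of_pos {p : ι → ℝ} {u : ι} (hpu : 0 < p u) :
    argminSet p u = {f | ∀ v, v ≠ u → p v / p u * f u < f v} := by
  ext f
  refine forall_congr' fun v => imp_congr_right fun _ => ?_
  rw [div_mul_eq_mul_div, div_lt_iff₀ hpu, mul_comm (f v)]

lemma mem_argminSet_of_forall_lt_div {f p : ι → ℝ} {u : ι} (hf : ∀ v, 0 < f v)
    (hp : ∀ v, 0 ≤ p v)
    (h : ∀ v, v ≠ u → ENNReal.ofReal (f u) / ENNReal.ofReal (p u) <
      ENNReal.ofReal (f v) / ENNReal.ofReal (p v)) :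
    f ∈ argminSet p u := by
  intro v hv
  have hlt := h v hv
  have hpu : 0 < p u := by
    by_contra! h0
    rw [le_antisymm h0 (hp u), ENNReal.ofReal_zero,
      ENNReal.div_zero (ENNReal.ofReal_pos.mpr (hf u)).ne'] at hlt
    exact not_top_lt hlt
  rcases (hp v).eq_or_lt with hpv | hpv
  · rw [← hpv, zero_mul]
    exact mul_pos hpu (hf v)
  · rwa [← ENNReal.ofReal_div_of_pos hpu, ← ENNReal.ofReal_div_of_pos hpv,
      ENNReal.ofReal_lt_ofReal_iff (div_pos (hf v) hpv), div_lt_div_iff₀ hpu hpv, mul_comm (f u),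
      mul_comm (f v)] at hlt

lemma expMeasure_Ioc_mul_prod_Ioi_le [DecidableEq ι] (hr : 0 < r) {s : Finset ι} {v₀ : ι}
    (hv₀ : v₀ ∈ s) {a : ι → ℝ} (ha : ∀ v, 0 ≤ a v) (b : ℝ) {t : ℝ} (ht : 0 ≤ t) :
    expMeasure r (Ioc (a v₀ * t) (b * t)) * ∏ v ∈ s.erase v₀, expMeasure r (Ioi (a v * t)) ≤
      ENNReal.ofReal (r * b) * ENNReal.ofReal (t ^ 1 * exp (-((r * ∑ v ∈ s, a v) * t))) := by
  have hP : 0 ≤ ∏ v ∈ s.erase v₀, exp (-(r * (a v * t))) :=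
    Finset.prod_nonneg fun v _ => (exp_pos _).le
  have hexp : exp (-(r * (a v₀ * t))) * ∏ v ∈ s.erase v₀, exp (-(r * (a v * t))) =
      exp (-((r * ∑ v ∈ s, a v) * t)) := by
    rw [← exp_sum, ← exp_add, Finset.add_sum_erase s (fun v => -(r * (a v * t))) hv₀,
      Finset.mul_sum, Finset.sum_mul, ← Finset.sum_neg_distrib]
    exact congrArg exp (Finset.sum_congr rfl fun v _ => by ring)
  rw [Finset.prod_congr rfl fun v _ => expMeasure_Ioi hr (mul_nonneg (ha v) ht),
    ← ENNReal.ofReal_prod_of_nonneg fun v _ => (exp_pos _).le, pow_one, ← hexp,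
    ← ENNReal.ofReal_mul' (by positivity)]
  refine (mul_le_mul_left (expMeasure_Ioc_le hr.le _ _) _).trans ?_
  rw [← ENNReal.ofReal_mul' hP]
  refine ENNReal.ofReal_le_ofReal ?_
  have := mul_nonneg (mul_nonneg hr.le (mul_nonneg (ha v₀) ht))
    (mul_nonneg (exp_pos (-(r * (a v₀ * t)))).le hP)
  linarith

variable [Fintype ι]

lemma pi_expMeasure_forall_mul_lt [DecidableEq ι] (hr : 0 < r) (u : ι) (a : ι → ℝ)
    (ha : ∀ v, 0 ≤ a v) :
    Measure.pi (fun _ : ι => expMeasure r) {f | ∀ v, v ≠ u → a v * f u < f v} =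
      ENNReal.ofReal (1 / (1 + ∑ v ∈ Finset.univ.erase u, a v)) := by
  have := isProbabilityMeasure_expMeasure hr
  set s := ∑ v ∈ Finset.univ.erase u, a v
  have hs : 0 ≤ s := Finset.sum_nonneg fun v _ => ha v
  have hslice : ∀ᵐ t ∂expMeasure r, ∏ v ∈ Finset.univ.erase u, expMeasure r (Ioi (a v * t)) =
      ENNReal.ofReal (t ^ 0 * exp (-((r * s) * t))) := by
    filter_upwards [ae_expMeasure_pos hr] with t ht
    rw [Finset.prod_congr rfl fun v _ => expMeasure_Ioi hr (mul_nonneg (ha v) ht.le),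
      ← ENNReal.ofReal_prod_of_nonneg fun v _ => (exp_pos _).le, ← exp_sum, pow_zero, one_mul,
      Finset.mul_sum, Finset.sum_mul, ← Finset.sum_neg_distrib]
    exact congrArg (ENNReal.ofReal ∘ exp) (Finset.sum_congr rfl fun v _ => by ring)
  refine (Measure.pi_setOf_forall_ne_mem_eq_lintegral _ u (fun v t => Ioi (a v * t))
      fun v => measurableSet_lt (f := fun p : ℝ × ℝ => a v * p.1) (by fun_prop)
        measurable_snd).trans ?_
  rw [lintegral_congr_ae hslice, lintegral_pow_mul_exp_neg_mul_expMeasure hr (by positivity),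
    Nat.factorial_zero]
  congr 1
  field_simp
  ring

/-- Conditionally on `T_u = t`, the event has probability at most
`r e^{-r a_{v₀} t} b t ⬝ ∏_{v ≠ u, v₀} e^{-r a_v t} = r b t e^{-r s t}`. -/
lemma pi_expMeasure_forall_mul_lt_inter_le [DecidableEq ι] (hr : 0 < r) {u v₀ : ι}
    (hv₀ : v₀ ≠ u) (a : ι → ℝ) (ha : ∀ v, 0 ≤ a v) (b : ℝ) :
    Measure.pi (fun _ : ι => expMeasure r) {f | (∀ v, v ≠ u → a v * f u < f v) ∧ f v₀ ≤ b * f u} ≤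
      ENNReal.ofReal (b / (1 + ∑ v ∈ Finset.univ.erase u, a v) ^ 2) := by
  have := isProbabilityMeasure_expMeasure hr
  set s := ∑ v ∈ Finset.univ.erase u, a v
  have hs : 0 ≤ s := Finset.sum_nonneg fun v _ => ha v
  have hv₀' : v₀ ∈ Finset.univ.erase u := Finset.mem_erase.mpr ⟨hv₀, Finset.mem_univ _⟩
  let I : ι → ℝ → Set ℝ := fun v t => {x | a v * t < x ∧ (v = v₀ → x ≤ b * t)}
  have hI : ∀ v, MeasurableSet {p : ℝ × ℝ | p.2 ∈ I v p.1} := fun v =>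
    (measurableSet_lt (f := fun p : ℝ × ℝ => a v * p.1) (by fun_prop) measurable_snd).inter
      ((MeasurableSet.const (v = v₀)).imp
        (measurableSet_le (g := fun p : ℝ × ℝ => b * p.1) measurable_snd (by fun_prop)))
  have hset : {f : ι → ℝ | (∀ v, v ≠ u → a v * f u < f v) ∧ f v₀ ≤ b * f u} =
      {f | ∀ v, v ≠ u → f v ∈ I v (f u)} := by
    ext f
    exact ⟨fun ⟨h, h₀⟩ v hv => ⟨h v hv, by rintro rfl; exact h₀⟩,
      fun h => ⟨fun v hv => (h v hv).1, (h v₀ hv₀).2 rfl⟩⟩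
  have hslice : ∀ᵐ t ∂expMeasure r, ∏ v ∈ Finset.univ.erase u, expMeasure r (I v t) ≤
      ENNReal.ofReal (r * b) * ENNReal.ofReal (t ^ 1 * exp (-((r * s) * t))) := by
    filter_upwards [ae_expMeasure_pos hr] with t ht
    have hI₀ : I v₀ t = Ioc (a v₀ * t) (b * t) := by ext; simp [I]
    have hI₁ : ∀ v ∈ (Finset.univ.erase u).erase v₀, I v t = Ioi (a v * t) := fun v hv => by
      ext; simp [I, Finset.ne_of_mem_erase hv]
    rw [← Finset.mul_prod_erase _ _ hv₀', hI₀, Finset.prod_congr rfl fun v hv => by rw [hI₁ v hv]]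
    exact expMeasure_Ioc_mul_prod_Ioi_le hr hv₀' ha b ht.le
  rw [hset, Measure.pi_setOf_forall_ne_mem_eq_lintegral _ u I hI]
  refine (lintegral_mono_ae hslice).trans_eq ?_
  rw [lintegral_const_mul _ (by fun_prop),
    lintegral_pow_mul_exp_neg_mul_expMeasure hr (by positivity), Nat.factorial_one,
    ← ENNReal.ofReal_mul' (by positivity), show r + r * s = r * (1 + s) by ring]
  congr 1
  field_simp
  ring

lemma measurableSet_argminSet (p : ι → ℝ) (u : ι) : MeasurableSet (argminSet p u) := by
  simp only [argminSet, Set.ofPred_forall]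
  exact MeasurableSet.iInter fun v => MeasurableSet.iInter fun _ =>
    measurableSet_lt (by fun_prop) (by fun_prop)

lemma ae_pi_expMeasure_pos (hr : 0 < r) :
    ∀ᵐ f ∂Measure.pi fun _ : ι => expMeasure r, ∀ v, 0 < f v :=
  have := isProbabilityMeasure_expMeasure hr
  Filter.eventually_all.2 fun _ => Measure.tendsto_eval_ae_ae.eventually (ae_expMeasure_pos hr)

lemma one_add_sum_erase_div [DecidableEq ι] {p : ι → ℝ} (hp1 : ∑ v, p v = 1) {u : ι}
    (hpu : 0 < p u) : 1 + ∑ v ∈ Finset.univ.erase u, p v / p u = 1 / p u := by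
  rw [← Finset.sum_div, Finset.sum_erase_eq_sub (Finset.mem_univ u), hp1]
  field_simp
  ring

lemma pi_expMeasure_argminSet (hr : 0 < r) {p : ι → ℝ} (hp0 : ∀ v, 0 ≤ p v)
    (hp1 : ∑ v, p v = 1) (u : ι) :
    Measure.pi (fun _ : ι => expMeasure r) (argminSet p u) = ENNReal.ofReal (p u) := by
  classical
  rcases (hp0 u).eq_or_lt with hpu | hpu
  · obtain ⟨v₀, hv₀u, hv₀⟩ : ∃ v₀, v₀ ≠ u ∧ 0 < p v₀ := by
      by_contra! h
      have : ∑ v, p v = 0 := Finset.sum_eq_zero fun v _ =>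
        if hv : v = u then hv ▸ hpu.symm else le_antisymm (h v hv) (hp0 v)
      linarith
    rw [← hpu, ENNReal.ofReal_zero]
    refine measure_eq_zero_iff_ae_notMem.mpr ?_
    filter_upwards [ae_pi_expMeasure_pos hr] with f hpos hf
    have := hf v₀ hv₀u
    rw [← hpu, zero_mul] at this
    exact this.not_ge (mul_pos hv₀ (hpos u)).le
  · rw [argminSet_eq_of_pos hpu, pi_expMeasure_forall_mul_lt hr u _
      fun v => div_nonneg (hp0 v) hpu.le, one_add_sum_erase_div hp1 hpu, one_div_one_div]

lemma pi_expMeasure_argminSet_inter_le (hr : 0 < r) {p : ι → ℝ}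
    (hp0 : ∀ v, 0 ≤ p v) (hp1 : ∑ v, p v = 1) {u v₀ : ι} (hv₀ : v₀ ≠ u) (hpu : 0 < p u) (c : ℝ) :
    Measure.pi (fun _ : ι => expMeasure r) (argminSet p u ∩ {f | f v₀ ≤ c * f u}) ≤
      ENNReal.ofReal (c * p u ^ 2) := by
  classical
  rw [argminSet_eq_of_pos hpu]
  refine (pi_expMeasure_forall_mul_lt_inter_le hr hv₀ _
    (fun v => div_nonneg (hp0 v) hpu.le) c).trans_eq ?_
  rw [one_add_sum_erase_div hp1 hpu]
  field_simp

end Race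

lemma two_rpow_logb_div_sub_logb_div {a b c : ℝ} (ha : 0 < a) (hb : 0 < b) (hc : 0 < c) :
    (2 : ℝ) ^ (logb 2 (a / c) - logb 2 (b / c)) = a / b := by
  rw [rpow_sub two_pos, rpow_logb two_pos (by norm_num) (div_pos ha hc),
    rpow_logb two_pos (by norm_num) (div_pos hb hc), div_div_div_cancel_right₀ hc.ne']

section Induced

variable {𝒳 𝒰 𝒴 : Type*} [Fintype 𝒳] {PX : 𝒳 → ℝ} {PUX : 𝒰 → 𝒳 → ℝ} {PYXU : 𝒴 → 𝒳 → 𝒰 → ℝ}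

lemma sum_mul_mul_pos (h0 : ∀ y x u, 0 ≤ PX x * PUX u x * PYXU y x u) {x : 𝒳} {u : 𝒰} {y : 𝒴}
    (h : 0 < PX x * PUX u x * PYXU y x u) : 0 < ∑ x', PX x' * PUX u x' * PYXU y x' u :=
  h.trans_le (Finset.single_le_sum (fun x' _ => h0 y x' u) (Finset.mem_univ x))

variable [Fintype 𝒰]

lemma sum_sum_mul_mul_pos (h0 : ∀ y x u, 0 ≤ PX x * PUX u x * PYXU y x u) {x : 𝒳} {u : 𝒰}
    {y : 𝒴} (h : 0 < PX x * PUX u x * PYXU y x u) :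
    0 < ∑ x', ∑ u', PX x' * PUX u' x' * PYXU y x' u' := by
  rw [Finset.sum_comm]
  exact (sum_mul_mul_pos h0 h).trans_le (Finset.single_le_sum
    (fun v _ => Finset.sum_nonneg fun x' _ => h0 y x' v) (Finset.mem_univ u))

/-- `P_{U|Y}(u|y)` for the joint pmf `P_X(x) P_{U|X}(u|x) P_{Y|X,U}(y|x,u)`; reducible so that it
matches the expanded quotient in the statement of the theorem. -/
noncomputable abbrev condUY (PX : 𝒳 → ℝ) (PUX : 𝒰 → 𝒳 → ℝ) (PYXU : 𝒴 → 𝒳 → 𝒰 → ℝ) (y : 𝒴)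
    (u : 𝒰) : ℝ :=
  (∑ x, PX x * PUX u x * PYXU y x u) / ∑ x, ∑ u', PX x * PUX u' x * PYXU y x u'

lemma condUY_nonneg (h0 : ∀ y x u, 0 ≤ PX x * PUX u x * PYXU y x u) (y : 𝒴) (u : 𝒰) :
    0 ≤ condUY PX PUX PYXU y u :=
  div_nonneg (Finset.sum_nonneg fun x _ => h0 y x u)
    (Finset.sum_nonneg fun x _ => Finset.sum_nonneg fun u' _ => h0 y x u')

lemma condUY_pos (h0 : ∀ y x u, 0 ≤ PX x * PUX u x * PYXU y x u) {x : 𝒳} {u : 𝒰} {y : 𝒴}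
    (h : 0 < PX x * PUX u x * PYXU y x u) : 0 < condUY PX PUX PYXU y u :=
  div_pos (sum_mul_mul_pos h0 h) (sum_sum_mul_mul_pos h0 h)

lemma sum_condUY (h0 : ∀ y x u, 0 ≤ PX x * PUX u x * PYXU y x u) {x : 𝒳} {u : 𝒰} {y : 𝒴}
    (h : 0 < PX x * PUX u x * PYXU y x u) : ∑ v, condUY PX PUX PYXU y v = 1 := by
  rw [← Finset.sum_div, Finset.sum_comm, div_self (sum_sum_mul_mul_pos h0 h).ne']

end Induced

section Model

variable {Ω 𝒳 𝒰 𝒴 : Type*} [MeasurableSpace Ω] {μ : Measure Ω}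
  {T : 𝒰 → Ω → ℝ} {X : Ω → 𝒳} {U : Ω → 𝒰} {Y : Ω → 𝒴} {PX : 𝒳 → ℝ} {PUX : 𝒰 → 𝒳 → ℝ}
  {PYXU : 𝒴 → 𝒳 → 𝒰 → ℝ}

lemma ae_mem_argminSet (hpos : ∀ᵐ ω ∂μ, ∀ v, 0 < T v ω) {W : Ω → 𝒰} {q : Ω → 𝒰 → ℝ}
    (hq : ∀ ω v, 0 ≤ q ω v)
    (hW : ∀ᵐ ω ∂μ, ∀ u, u ≠ W ω → ENNReal.ofReal (T (W ω) ω) / ENNReal.ofReal (q ω (W ω)) <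
      ENNReal.ofReal (T u ω) / ENNReal.ofReal (q ω u)) :
    ∀ᵐ ω ∂μ, (fun v => T v ω) ∈ argminSet (q ω) (W ω) := by
  filter_upwards [hpos, hW] with ω hω hWω
  exact mem_argminSet_of_forall_lt_div hω (hq ω) hWω

def HasCondLaw (μ : Measure Ω) (X : Ω → 𝒳) (U : Ω → 𝒰) (Y : Ω → 𝒴) (T : 𝒰 → Ω → ℝ)
    (PYXU : 𝒴 → 𝒳 → 𝒰 → ℝ) : Prop :=
  ∀ x u y S, MeasurableSet S →
    μ ({ω | Y ω = y} ∩ {ω | X ω = x ∧ U ω = u} ∩ {ω | (fun v => T v ω) ∈ S}) =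
      ENNReal.ofReal (PYXU y x u) * μ ({ω | X ω = x ∧ U ω = u} ∩ {ω | (fun v => T v ω) ∈ S})

variable [Fintype 𝒰]

def HasLawPiExp (μ : Measure Ω) (X : Ω → 𝒳) (T : 𝒰 → Ω → ℝ) (PX : 𝒳 → ℝ) : Prop :=
  ∀ x S, MeasurableSet S → μ ({ω | X ω = x} ∩ {ω | (fun u => T u ω) ∈ S}) =
    ENNReal.ofReal (PX x) * (Measure.pi fun _ : 𝒰 => expMeasure 1) S

lemma ae_forall_pos [Countable 𝒳] (hXT : HasLawPiExp μ X T PX) : ∀ᵐ ω ∂μ, ∀ v, 0 < T v ω := by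
  refine ae_all_iff.mpr fun v => measure_mono_null
    (t := ⋃ x, {ω | X ω = x} ∩ {ω | (fun u => T u ω) ∈ {f : 𝒰 → ℝ | f v ≤ 0}})
    (fun ω (hω : ¬ 0 < T v ω) => mem_iUnion.mpr ⟨X ω, rfl, not_lt.mp hω⟩)
    (measure_iUnion_null fun x => ?_)
  have hnull : Measure.pi (fun _ : 𝒰 => expMeasure 1) {f | f v ≤ 0} = 0 :=
    measure_eq_zero_iff_ae_notMem.mpr <| by
      filter_upwards [ae_pi_expMeasure_pos one_pos] with f hf using (hf v).not_ge
  rw [hXT x _ (measurableSet_le (measurable_pi_apply v) measurable_const), hnull, mul_zero]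

lemma measure_inter_eq_pi_argminSet_inter (hXT : HasLawPiExp μ X T PX)
    (hU : ∀ᵐ ω ∂μ, (fun v => T v ω) ∈ argminSet (fun v => PUX v (X ω)) (U ω))
    (x : 𝒳) (u : 𝒰) {S : Set (𝒰 → ℝ)} (hS : MeasurableSet S) :
    μ ({ω | X ω = x ∧ U ω = u} ∩ {ω | (fun v => T v ω) ∈ S}) =
      ENNReal.ofReal (PX x) *
        (Measure.pi fun _ : 𝒰 => expMeasure 1) (argminSet (fun v => PUX v x) u ∩ S) := by
  rw [← hXT x _ ((measurableSet_argminSet _ u).inter hS)]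
  refine measure_congr (Filter.eventuallyEq_set.mpr ?_)
  filter_upwards [hU] with ω hω
  simp only [mem_inter_iff, mem_ofPred_eq]
  constructor
  · rintro ⟨⟨rfl, rfl⟩, hS⟩
    exact ⟨rfl, hω, hS⟩
  · rintro ⟨rfl, hu, hS⟩
    exact ⟨⟨rfl, eq_of_mem_argminSet hω hu⟩, hS⟩

lemma measure_X_U_Y_eq (hXT : HasLawPiExp μ X T PX)
    (hU : ∀ᵐ ω ∂μ, (fun v => T v ω) ∈ argminSet (fun v => PUX v (X ω)) (U ω))
    (hY : HasCondLaw μ X U Y T PYXU) (hPX0 : ∀ x, 0 ≤ PX x) (hPUX0 : ∀ u x, 0 ≤ PUX u x)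
    (hPUX1 : ∀ x, ∑ u, PUX u x = 1) (hPYXU0 : ∀ y x u, 0 ≤ PYXU y x u) (x : 𝒳) (u : 𝒰) (y : 𝒴) :
    μ {ω | X ω = x ∧ U ω = u ∧ Y ω = y} = ENNReal.ofReal (PX x * PUX u x * PYXU y x u) := by
  have hset : {ω | X ω = x ∧ U ω = u ∧ Y ω = y} =
      {ω | Y ω = y} ∩ {ω | X ω = x ∧ U ω = u} ∩ {ω | (fun v => T v ω) ∈ univ} := by
    ext ω
    simp only [mem_inter_iff, mem_ofPred_eq, mem_univ, and_true]
    tauto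
  rw [hset, hY x u y _ MeasurableSet.univ, measure_inter_eq_pi_argminSet_inter hXT hU x u
    MeasurableSet.univ, inter_univ, pi_expMeasure_argminSet one_pos (fun v => hPUX0 v x) (hPUX1 x),
    ← ENNReal.ofReal_mul (hPX0 x), ← ENNReal.ofReal_mul (hPYXU0 y x u), mul_comm (PYXU y x u)]

lemma measure_inter_le_of_ne (hXT : HasLawPiExp μ X T PX)
    (hU : ∀ᵐ ω ∂μ, (fun v => T v ω) ∈ argminSet (fun v => PUX v (X ω)) (U ω))
    (hY : HasCondLaw μ X U Y T PYXU) (hPX0 : ∀ x, 0 ≤ PX x) (hPUX0 : ∀ u x, 0 ≤ PUX u x)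
    (hPUX1 : ∀ x, ∑ u, PUX u x = 1) (hPYXU0 : ∀ y x u, 0 ≤ PYXU y x u) {x : 𝒳} {u v : 𝒰}
    (hv : v ≠ u) (hpu : 0 < PUX u x) (y : 𝒴) (c : ℝ) :
    μ ({ω | Y ω = y} ∩ {ω | X ω = x ∧ U ω = u} ∩ {ω | T v ω ≤ c * T u ω}) ≤
      ENNReal.ofReal (c * (PYXU y x u * PX x * PUX u x ^ 2)) := by
  have hS : MeasurableSet {f : 𝒰 → ℝ | f v ≤ c * f u} :=
    measurableSet_le (by fun_prop) (by fun_prop)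
  rw [show {ω | T v ω ≤ c * T u ω} = {ω | (fun w => T w ω) ∈ {f : 𝒰 → ℝ | f v ≤ c * f u}} from rfl,
    hY x u y _ hS, measure_inter_eq_pi_argminSet_inter hXT hU x u hS]
  calc ENNReal.ofReal (PYXU y x u) * (ENNReal.ofReal (PX x) *
        (Measure.pi fun _ : 𝒰 => expMeasure 1) (argminSet (fun v => PUX v x) u ∩ _))
      ≤ ENNReal.ofReal (PYXU y x u) *
          (ENNReal.ofReal (PX x) * ENNReal.ofReal (c * PUX u x ^ 2)) := by
        gcongr
        exact pi_expMeasure_argminSet_inter_le one_pos (fun w => hPUX0 w x) (hPUX1 x) hv hpu c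
    _ = ENNReal.ofReal (c * (PYXU y x u * PX x * PUX u x ^ 2)) := by
        rw [← ENNReal.ofReal_mul (hPX0 x), ← ENNReal.ofReal_mul (hPYXU0 y x u)]
        congr 1
        ring

lemma measure_ne_argmin_le [DecidableEq 𝒰] (hXT : HasLawPiExp μ X T PX)
    (hU : ∀ᵐ ω ∂μ, (fun v => T v ω) ∈ argminSet (fun v => PUX v (X ω)) (U ω))
    (hY : HasCondLaw μ X U Y T PYXU) {W : Ω → 𝒰} {q : 𝒴 → 𝒰 → ℝ}
    (hW : ∀ᵐ ω ∂μ, (fun v => T v ω) ∈ argminSet (q (Y ω)) (W ω))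
    (hPX0 : ∀ x, 0 ≤ PX x) (hPUX0 : ∀ u x, 0 ≤ PUX u x) (hPUX1 : ∀ x, ∑ u, PUX u x = 1)
    (hPYXU0 : ∀ y x u, 0 ≤ PYXU y x u) {x : 𝒳} {u : 𝒰} {y : 𝒴} (hpu : 0 < PUX u x)
    (hq0 : ∀ v, 0 ≤ q y v) (hq1 : ∑ v, q y v = 1) (hqu : 0 < q y u) :
    μ {ω | U ω ≠ W ω ∧ X ω = x ∧ U ω = u ∧ Y ω = y} ≤
      ENNReal.ofReal (PYXU y x u * PX x * PUX u x ^ 2 / q y u) := by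
  set K := PYXU y x u * PX x * PUX u x ^ 2
  have hK : 0 ≤ K := by have := hPYXU0 y x u; have := hPX0 x; positivity
  have hsub : {ω | U ω ≠ W ω ∧ X ω = x ∧ U ω = u ∧ Y ω = y} ≤ᵐ[μ] ⋃ v ∈ Finset.univ.erase u,
      {ω | Y ω = y} ∩ {ω | X ω = x ∧ U ω = u} ∩ {ω | T v ω ≤ q y v / q y u * T u ω} := by
    filter_upwards [hW] with ω hω ⟨hne, hx, hu, hy⟩
    subst hu hy
    refine mem_biUnion (Finset.mem_erase.mpr ⟨Ne.symm hne, Finset.mem_univ _⟩)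
      ⟨⟨rfl, hx, rfl⟩, ?_⟩
    have := hω (U ω) hne
    show T (W ω) ω ≤ q (Y ω) (W ω) / q (Y ω) (U ω) * T (U ω) ω
    rw [div_mul_eq_mul_div, le_div_iff₀ hqu]
    linarith
  calc μ {ω | U ω ≠ W ω ∧ X ω = x ∧ U ω = u ∧ Y ω = y}
      ≤ ∑ v ∈ Finset.univ.erase u,
          μ ({ω | Y ω = y} ∩ {ω | X ω = x ∧ U ω = u} ∩ {ω | T v ω ≤ q y v / q y u * T u ω}) :=
        (measure_mono_ae hsub).trans (measure_biUnion_finset_le _ _)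
    _ ≤ ∑ v ∈ Finset.univ.erase u, ENNReal.ofReal (q y v / q y u * K) :=
        Finset.sum_le_sum fun v hv => measure_inter_le_of_ne hXT hU hY hPX0 hPUX0 hPUX1 hPYXU0
          (Finset.ne_of_mem_erase hv) hpu y _
    _ = ENNReal.ofReal ((1 - q y u) / q y u * K) := by
        rw [← ENNReal.ofReal_sum_of_nonneg fun v _ => by have := hq0 v; positivity,
          ← Finset.sum_mul, ← Finset.sum_div, Finset.sum_erase_eq_sub (Finset.mem_univ u), hq1]
    _ ≤ ENNReal.ofReal (K / q y u) := by
        refine ENNReal.ofReal_le_ofReal ?_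
        rw [div_mul_eq_mul_div, div_le_div_iff_of_pos_right hqu]
        nlinarith [mul_nonneg hqu.le hK]

end Model

end PoissonMatching

theorem discrete_poisson_matching_lemma_general
    {Ω 𝒳 𝒰 𝒴 : Type*} [MeasurableSpace Ω]
    [Fintype 𝒳] [Fintype 𝒰]
    (μ : Measure Ω)
    (PX : 𝒳 → ℝ) (hPX0 : ∀ x, 0 ≤ PX x)
    (PUX : 𝒰 → 𝒳 → ℝ) (hPUX0 : ∀ u x, 0 ≤ PUX u x) (hPUX1 : ∀ x, ∑ u, PUX u x = 1)
    (PYXU : 𝒴 → 𝒳 → 𝒰 → ℝ) (hPYXU0 : ∀ y x u, 0 ≤ PYXU y x u)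
    (T : 𝒰 → Ω → ℝ) (X : Ω → 𝒳) (U Uhat : Ω → 𝒰) (Y : Ω → 𝒴)
    -- `X ∼ P_X` and `(T_u)_u` i.i.d. `Exp(1)`, independent of `X`:
    (hXT : ∀ (x : 𝒳) (S : Set (𝒰 → ℝ)), MeasurableSet S →
      μ ({ω | X ω = x} ∩ {ω | (fun u => T u ω) ∈ S}) =
        ENNReal.ofReal (PX x) * (Measure.pi fun _ : 𝒰 => expMeasure 1) S)
    -- `U = argmin_u T_u / P_{U|X}(u|X)` (a.s. unique argmin):
    (hU : ∀ᵐ ω ∂μ, ∀ u, u ≠ U ω →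
      ENNReal.ofReal (T (U ω) ω) / ENNReal.ofReal (PUX (U ω) (X ω)) <
        ENNReal.ofReal (T u ω) / ENNReal.ofReal (PUX u (X ω)))
    -- `Y | (X,U) ∼ P_{Y|X,U}`, conditionally independent of `T` given `(X,U)`:
    (hY : ∀ (x : 𝒳) (u : 𝒰) (y : 𝒴) (S : Set (𝒰 → ℝ)), MeasurableSet S →
      μ ({ω | Y ω = y} ∩ {ω | X ω = x ∧ U ω = u} ∩ {ω | (fun v => T v ω) ∈ S}) =
        ENNReal.ofReal (PYXU y x u) *
          μ ({ω | X ω = x ∧ U ω = u} ∩ {ω | (fun v => T v ω) ∈ S}))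
    -- `Û = argmin_u T_u / P_{U|Y}(u|Y)` (a.s. unique argmin), where
    -- `P_{U|Y}(u|y) = (∑ x, P_X x P_{U|X}(u|x) P_{Y|X,U}(y|x,u)) / P_Y y`:
    (hUhat : ∀ᵐ ω ∂μ, ∀ u, u ≠ Uhat ω →
      ENNReal.ofReal (T (Uhat ω) ω) /
          ENNReal.ofReal ((∑ x, PX x * PUX (Uhat ω) x * PYXU (Y ω) x (Uhat ω)) /
            (∑ x, ∑ u', PX x * PUX u' x * PYXU (Y ω) x u')) <
        ENNReal.ofReal (T u ω) /
          ENNReal.ofReal ((∑ x, PX x * PUX u x * PYXU (Y ω) x u) /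
            (∑ x, ∑ u', PX x * PUX u' x * PYXU (Y ω) x u'))) :
    -- conclusion 1: `(X, U, Y) ∼ P_{X,U,Y}`
    (∀ (x : 𝒳) (u : 𝒰) (y : 𝒴),
      μ {ω | X ω = x ∧ U ω = u ∧ Y ω = y} =
        ENNReal.ofReal (PX x * PUX u x * PYXU y x u))
    -- conclusion 2: `ℙ(U ≠ Û | X = x, U = u, Y = y) ≤ 2^{ι_{U;X}(u;x) − ι_{U;Y}(u;y)}`
    ∧ (∀ (x : 𝒳) (u : 𝒰) (y : 𝒴),
      μ {ω | U ω ≠ Uhat ω ∧ X ω = x ∧ U ω = u ∧ Y ω = y} ≤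
        ENNReal.ofReal ((2 : ℝ) ^
            (Real.logb 2 (PUX u x / (∑ x', PX x' * PUX u x'))
              - Real.logb 2
                (((∑ x', PX x' * PUX u x' * PYXU y x' u) /
                    (∑ x', ∑ u', PX x' * PUX u' x' * PYXU y x' u')) /
                  (∑ x', PX x' * PUX u x')))) *
          μ {ω | X ω = x ∧ U ω = u ∧ Y ω = y}) := by
  open PoissonMatching in
  classical
  have hmass0 : ∀ y x u, 0 ≤ PX x * PUX u x * PYXU y x u := fun y x u =>
    mul_nonneg (mul_nonneg (hPX0 x) (hPUX0 u x)) (hPYXU0 y x u)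
  have hpos := ae_forall_pos hXT
  have hUarg := ae_mem_argminSet hpos (fun ω v => hPUX0 v (X ω)) hU
  have hUhatarg := ae_mem_argminSet (q := fun ω => condUY PX PUX PYXU (Y ω)) hpos
    (fun ω => condUY_nonneg hmass0 (Y ω)) hUhat
  have hlaw := measure_X_U_Y_eq hXT hUarg hY hPX0 hPUX0 hPUX1 hPYXU0
  refine ⟨hlaw, fun x u y => ?_⟩
  rcases (hmass0 y x u).eq_or_lt with hzero | hmass
  · refine (measure_mono (t := {ω | X ω = x ∧ U ω = u ∧ Y ω = y}) fun ω hω => hω.2).trans ?_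
    rw [hlaw, ← hzero, ENNReal.ofReal_zero, mul_zero]
  have hpx : 0 < PX x := (hPX0 x).lt_of_ne fun h => by simp [← h] at hmass
  have hpu : 0 < PUX u x := (hPUX0 u x).lt_of_ne fun h => by simp [← h] at hmass
  have hPU : 0 < ∑ x', PX x' * PUX u x' := (mul_pos hpx hpu).trans_le
    (Finset.single_le_sum (fun x' _ => mul_nonneg (hPX0 x') (hPUX0 u x')) (Finset.mem_univ x))
  have hqu := condUY_pos hmass0 hmass
  refine (measure_ne_argmin_le hXT hUarg hY hUhatarg hPX0 hPUX0 hPUX1 hPYXU0 hpu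
    (condUY_nonneg hmass0 y) (sum_condUY hmass0 hmass) hqu).trans_eq ?_
  rw [two_rpow_logb_div_sub_logb_div hpu hqu hPU, hlaw,
    ← ENNReal.ofReal_mul (div_nonneg hpu.le hqu.le)]
  congr 1
  field_simp

/-- discrete Poisson matching lemma. Let
`P_{X,U,Y} = P_X ∘ P_{U|X} ∘ P_{Y|X,U}` on finite alphabets. Let `(T_u)` be
i.i.d. `Exp(1)` independent of `X ∼ P_X` (hypothesis `hXT`: the pair
`(X, (T_u)_u)` has law `P_X ⊗ Exp(1)^𝒰`). Let `U` be the a.s. unique argmin of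
`T_u / P_{U|X}(u|X)` (hypothesis `hU`, with `a/0 = ∞` via `ℝ≥0∞` division),
let `Y` be generated from `(X,U)` by `P_{Y|X,U}`, conditionally independent of
`T` (hypothesis `hY`), and let `Û` be the a.s. unique argmin of
`T_u / P_{U|Y}(u|Y)` (hypothesis `hUhat`). Then `(X,U,Y) ∼ P_{X,U,Y}` and,
almost surely (i.e. atomwise on `(X,U,Y)`),
`ℙ(U ≠ Û | X,U,Y) ≤ 2^{ι_{U;X}(U;X) − ι_{U;Y}(U;Y)}`. -/
theorem discrete_poisson_matching_lemma
    {Ω 𝒳 𝒰 𝒴 : Type*} [MeasurableSpace Ω]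
    [Fintype 𝒳] [Fintype 𝒰] [Fintype 𝒴]
    [MeasurableSpace 𝒳] [MeasurableSingletonClass 𝒳]
    [MeasurableSpace 𝒰] [MeasurableSingletonClass 𝒰]
    [MeasurableSpace 𝒴] [MeasurableSingletonClass 𝒴]
    (μ : Measure Ω) [IsProbabilityMeasure μ]
    (PX : 𝒳 → ℝ) (hPX0 : ∀ x, 0 ≤ PX x) (hPX1 : ∑ x, PX x = 1)
    (PUX : 𝒰 → 𝒳 → ℝ) (hPUX0 : ∀ u x, 0 ≤ PUX u x) (hPUX1 : ∀ x, ∑ u, PUX u x = 1)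
    (PYXU : 𝒴 → 𝒳 → 𝒰 → ℝ) (hPYXU0 : ∀ y x u, 0 ≤ PYXU y x u)
    (hPYXU1 : ∀ x u, ∑ y, PYXU y x u = 1)
    (T : 𝒰 → Ω → ℝ) (X : Ω → 𝒳) (U Uhat : Ω → 𝒰) (Y : Ω → 𝒴)
    (hTm : ∀ u, Measurable (T u)) (hXm : Measurable X) (hUm : Measurable U)
    (hUhatm : Measurable Uhat) (hYm : Measurable Y)
    -- `X ∼ P_X` and `(T_u)_u` i.i.d. `Exp(1)`, independent of `X`:
    (hXT : ∀ (x : 𝒳) (S : Set (𝒰 → ℝ)), MeasurableSet S →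
      μ ({ω | X ω = x} ∩ {ω | (fun u => T u ω) ∈ S}) =
        ENNReal.ofReal (PX x) * (Measure.pi fun _ : 𝒰 => expMeasure 1) S)
    -- `U = argmin_u T_u / P_{U|X}(u|X)` (a.s. unique argmin):
    (hU : ∀ᵐ ω ∂μ, ∀ u, u ≠ U ω →
      ENNReal.ofReal (T (U ω) ω) / ENNReal.ofReal (PUX (U ω) (X ω)) <
        ENNReal.ofReal (T u ω) / ENNReal.ofReal (PUX u (X ω)))
    -- `Y | (X,U) ∼ P_{Y|X,U}`, conditionally independent of `T` given `(X,U)`: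
    (hY : ∀ (x : 𝒳) (u : 𝒰) (y : 𝒴) (S : Set (𝒰 → ℝ)), MeasurableSet S →
      μ ({ω | Y ω = y} ∩ {ω | X ω = x ∧ U ω = u} ∩ {ω | (fun v => T v ω) ∈ S}) =
        ENNReal.ofReal (PYXU y x u) *
          μ ({ω | X ω = x ∧ U ω = u} ∩ {ω | (fun v => T v ω) ∈ S}))
    -- `Û = argmin_u T_u / P_{U|Y}(u|Y)` (a.s. unique argmin), where
    -- `P_{U|Y}(u|y) = (∑ x, P_X x P_{U|X}(u|x) P_{Y|X,U}(y|x,u)) / P_Y y`: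
    (hUhat : ∀ᵐ ω ∂μ, ∀ u, u ≠ Uhat ω →
      ENNReal.ofReal (T (Uhat ω) ω) /
          ENNReal.ofReal ((∑ x, PX x * PUX (Uhat ω) x * PYXU (Y ω) x (Uhat ω)) /
            (∑ x, ∑ u', PX x * PUX u' x * PYXU (Y ω) x u')) <
        ENNReal.ofReal (T u ω) /
          ENNReal.ofReal ((∑ x, PX x * PUX u x * PYXU (Y ω) x u) /
            (∑ x, ∑ u', PX x * PUX u' x * PYXU (Y ω) x u'))) :
    -- conclusion 1: `(X, U, Y) ∼ P_{X,U,Y}`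
    (∀ (x : 𝒳) (u : 𝒰) (y : 𝒴),
      μ {ω | X ω = x ∧ U ω = u ∧ Y ω = y} =
        ENNReal.ofReal (PX x * PUX u x * PYXU y x u))
    -- conclusion 2: `ℙ(U ≠ Û | X = x, U = u, Y = y) ≤ 2^{ι_{U;X}(u;x) − ι_{U;Y}(u;y)}`
    ∧ (∀ (x : 𝒳) (u : 𝒰) (y : 𝒴),
      μ {ω | U ω ≠ Uhat ω ∧ X ω = x ∧ U ω = u ∧ Y ω = y} ≤
        ENNReal.ofReal ((2 : ℝ) ^
            (Real.logb 2 (PUX u x / (∑ x', PX x' * PUX u x'))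
              - Real.logb 2
                (((∑ x', PX x' * PUX u x' * PYXU y x' u) /
                    (∑ x', ∑ u', PX x' * PUX u' x' * PYXU y x' u')) /
                  (∑ x', PX x' * PUX u x')))) *
          μ {ω | X ω = x ∧ U ω = u ∧ Y ω = y}) :=
  discrete_poisson_matching_lemma_general μ PX hPX0 PUX hPUX0 hPUX1 PYXU hPYXU0 T X U Uhat Y hXT hU
    hY hUhat
end

section
/- (Corollary of the Poisson matching lemma.) Under the setup of the discrete Poisson matching lemma, for any event $E$ that is measurable with respect to $(X,U,Y)$ and any $\gamma \in \mathbb{R}$: $\mathbb{P}(E \text{ or } U \neq \hat{U}) \le \mathbb{P}(E \text{ or } \iota_{U;X}(U;X) - \iota_{U;Y}(U;Y) > -\gamma) + 2^{-\gamma}$. -/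
open MeasureTheory

/-- corollary of the Poisson matching lemma. Under the setup of
the discrete Poisson matching lemma — `(X,U,Y)` random variables on finite
alphabets and `Û` such that the pointwise (atomwise) bound
`ℙ(U ≠ Û | X,U,Y) ≤ 2^{ι_{U;X}(U;X) − ι_{U;Y}(U;Y)}` holds — for any event `E`
measurable w.r.t. `(X,U,Y)` (i.e. `E = {(X,U,Y) ∈ A}`) and any `γ ∈ ℝ`:
`ℙ(E or U ≠ Û) ≤ ℙ(E or ι_{U;X}(U;X) − ι_{U;Y}(U;Y) > −γ) + 2^{−γ}`. -/
theorem poisson_matching_corollary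
    {Ω 𝒳 𝒰 𝒴 : Type*} [MeasurableSpace Ω]
    [Fintype 𝒳] [Fintype 𝒰] [Fintype 𝒴]
    [MeasurableSpace 𝒳] [MeasurableSingletonClass 𝒳]
    [MeasurableSpace 𝒰] [MeasurableSingletonClass 𝒰]
    [MeasurableSpace 𝒴] [MeasurableSingletonClass 𝒴]
    (μ : Measure Ω) [IsProbabilityMeasure μ]
    (X : Ω → 𝒳) (U Uhat : Ω → 𝒰) (Y : Ω → 𝒴)
    (hXm : Measurable X) (hUm : Measurable U) (hUhatm : Measurable Uhat)
    (hYm : Measurable Y)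
    -- information densities `ι_{U;X}` and `ι_{U;Y}` of the joint law of `(X,U,Y)`
    (ι₁ : 𝒰 → 𝒳 → ℝ) (ι₂ : 𝒰 → 𝒴 → ℝ)
    -- the pointwise bound from the Poisson matching lemma, atomwise on `(X,U,Y)`
    (hpml : ∀ (x : 𝒳) (u : 𝒰) (y : 𝒴),
      μ {ω | U ω ≠ Uhat ω ∧ X ω = x ∧ U ω = u ∧ Y ω = y} ≤
        ENNReal.ofReal ((2 : ℝ) ^ (ι₁ u x - ι₂ u y)) *
          μ {ω | X ω = x ∧ U ω = u ∧ Y ω = y})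
    (A : Set (𝒳 × 𝒰 × 𝒴)) (γ : ℝ) :
    μ {ω | (X ω, U ω, Y ω) ∈ A ∨ U ω ≠ Uhat ω} ≤
      μ {ω | (X ω, U ω, Y ω) ∈ A ∨ ι₁ (U ω) (X ω) - ι₂ (U ω) (Y ω) > -γ}
        + ENNReal.ofReal ((2 : ℝ) ^ (-γ)) := by

  classical
  set g : Ω → 𝒳 × 𝒰 × 𝒴 := fun ω => (X ω, U ω, Y ω) with hg
  set W : Set Ω := {ω | U ω ≠ Uhat ω ∧ ι₁ (U ω) (X ω) - ι₂ (U ω) (Y ω) ≤ -γ} with hW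
  have hsub : {ω | (X ω, U ω, Y ω) ∈ A ∨ U ω ≠ Uhat ω} ⊆
      {ω | (X ω, U ω, Y ω) ∈ A ∨ ι₁ (U ω) (X ω) - ι₂ (U ω) (Y ω) > -γ} ∪ W := by
    intro ω hω
    rcases hω with h | h
    · exact Or.inl (Or.inl h)
    · by_cases hι : ι₁ (U ω) (X ω) - ι₂ (U ω) (Y ω) > -γ
      · exact Or.inl (Or.inr hι)
      · exact Or.inr ⟨h, le_of_not_gt hι⟩
  refine ((measure_mono hsub).trans (measure_union_le _ _)).trans ?_
  gcongr
  have hWdec : W = ⋃ p : 𝒳 × 𝒰 × 𝒴, (W ∩ g ⁻¹' {p}) := by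
    ext ω; simp
  calc μ W ≤ ∑ p : 𝒳 × 𝒰 × 𝒴, μ (W ∩ g ⁻¹' {p}) := by
        conv_lhs => rw [hWdec]
        exact measure_iUnion_fintype_le μ _
    _ ≤ ∑ p : 𝒳 × 𝒰 × 𝒴, ENNReal.ofReal ((2 : ℝ) ^ (-γ)) * μ (g ⁻¹' {p}) := by
        refine Finset.sum_le_sum fun p _ => ?_
        obtain ⟨x, u, y⟩ := p
        by_cases hcond : ι₁ u x - ι₂ u y ≤ -γ
        · have hsub2 : W ∩ g ⁻¹' {(x, u, y)} ⊆
              {ω | U ω ≠ Uhat ω ∧ X ω = x ∧ U ω = u ∧ Y ω = y} := by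
            intro ω ⟨hw, hp⟩
            simp only [hg, Set.mem_preimage, Set.mem_singleton_iff, Prod.mk.injEq] at hp
            exact ⟨hw.1, hp.1, hp.2.1, hp.2.2⟩
          have hpre : g ⁻¹' {(x, u, y)} = {ω | X ω = x ∧ U ω = u ∧ Y ω = y} := by
            ext ω; simp [hg, Prod.ext_iff, and_assoc]
          calc μ (W ∩ g ⁻¹' {(x, u, y)})
              ≤ μ {ω | U ω ≠ Uhat ω ∧ X ω = x ∧ U ω = u ∧ Y ω = y} := measure_mono hsub2
            _ ≤ ENNReal.ofReal ((2 : ℝ) ^ (ι₁ u x - ι₂ u y)) *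
                  μ {ω | X ω = x ∧ U ω = u ∧ Y ω = y} := hpml x u y
            _ ≤ ENNReal.ofReal ((2 : ℝ) ^ (-γ)) * μ (g ⁻¹' {(x, u, y)}) := by
                rw [hpre]
                exact mul_le_mul' (ENNReal.ofReal_le_ofReal
                  (Real.rpow_le_rpow_of_exponent_le one_le_two hcond)) le_rfl
        · have hempty : W ∩ g ⁻¹' {(x, u, y)} = ∅ := by
            ext ω
            simp only [Set.mem_inter_iff, Set.mem_empty_iff_false, iff_false, not_and]
            intro hw hp
            simp only [hg, Set.mem_preimage, Set.mem_singleton_iff, Prod.mk.injEq] at hp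
            obtain ⟨hx, hu, hy⟩ := hp
            subst hx; subst hu; subst hy
            exact hcond hw.2
          simp [hempty]
    _ = ENNReal.ofReal ((2 : ℝ) ^ (-γ)) * ∑ p : 𝒳 × 𝒰 × 𝒴, μ (g ⁻¹' {p}) := by
        rw [Finset.mul_sum]
    _ ≤ ENNReal.ofReal ((2 : ℝ) ^ (-γ)) * 1 := by
        gcongr
        have hgm : Measurable g := hXm.prodMk (hUm.prodMk hYm)
        have := MeasureTheory.sum_measure_preimage_singleton (μ := μ)
          (f := g) Finset.univ (fun p _ => hgm (measurableSet_singleton p))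
        rw [this]
        simp
    _ = ENNReal.ofReal ((2 : ℝ) ^ (-γ)) := mul_one _
end

section
/- (First-order optimality identity for rate-distortion.) Let $P_X$ be a pmf on finite $\mathcal{X}$, $d : \mathcal{X} \times \mathcal{Y} \to \mathbb{R}$ a distortion function on finite alphabets, $\lambda > 0$, and suppose $P_{Y|X}$ minimizes $I(X;Y) + \lambda\, \mathbb{E}[d(X,Y)]$ over all conditional pmfs from $\mathcal{X}$ to $\mathcal{Y}$, where $(X,Y) \sim P_X \circ P_{Y|X}$. Then for every $V_{Y|X} \in \mathrm{Tan}(P_{Y|X})$, $\sum_{x,y} P_X(x)\, V_{Y|X}(y|x)\, \big( \iota_{X;Y}(x;y) + \lambda\, d(x,y) \big) = 0$, where $\iota_{X;Y}(x;y) = \log_2 \frac{P_{Y|X}(y|x)}{P_Y(y)}$ with $P_Y$ the induced marginal. -/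
/-!
Perturb the minimizer along the line `t ↦ Q + t • V`. Since `V` vanishes off the support of `Q`
and has zero row sums, `Q + t • V` is still a conditional pmf for small `|t|`, so the objective
has a local minimum at `t = 0` and its derivative there vanishes. Differentiating
`P x Q(y|x) log₂ (Q(y|x) / P_Y y)` termwise gives `P x V(y|x) ι(x;y)` plus the correction
`P x (V(y|x) - Q(y|x) P_V y / P_Y y) / log 2`, with `P_V y = ∑ₓ P x V(y|x)`; for each `y` these
corrections cancel in the sum over `x`, so the derivative of `I(X;Y)` along `V` is
`∑ P x V(y|x) ι(x;y)`.
-/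

open Filter Finset Topology

theorem HasDerivAt.mul_logb_div {f g : ℝ → ℝ} {f' g' t : ℝ} (hf : HasDerivAt f f' t)
    (hg : HasDerivAt g g' t) (hft : f t ≠ 0) (hgt : g t ≠ 0) :
    HasDerivAt (fun s => f s * Real.logb 2 (f s / g s))
      (f' * Real.logb 2 (f t / g t) + (f' - f t * g' / g t) / Real.log 2) t := by
  refine (hf.fun_mul (((hf.fun_div hg hgt).log (div_ne_zero hft hgt)).div_const
    (Real.log 2))).congr_deriv ?_
  rw [Real.logb]
  field_simp

theorem eventually_nonneg_add_smul {𝒳 𝒴 : Type*} [Finite 𝒳] [Finite 𝒴] {Q V : 𝒳 → 𝒴 → ℝ}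
    (hQ0 : ∀ x y, 0 ≤ Q x y) (hV0 : ∀ x y, Q x y = 0 → V x y = 0) :
    ∀ᶠ t in 𝓝 (0 : ℝ), ∀ x y, 0 ≤ (Q + t • V) x y := by
  refine eventually_all.2 fun x => eventually_all.2 fun y => ?_
  rcases (hQ0 x y).eq_or_lt with hQ | hQ
  · exact .of_forall fun t => by simp [← hQ, hV0 x y hQ.symm]
  · have hcont : Continuous fun t : ℝ => (Q + t • V) x y := by
      simp only [Pi.add_apply, Pi.smul_apply, smul_eq_mul]
      fun_prop
    exact (continuousAt_const.eventually_lt hcont.continuousAt (by simpa using hQ)).mono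
      fun _ => le_of_lt

namespace RateDistortion

variable {𝒳 𝒴 : Type*} [Fintype 𝒳]

def marginal (P : 𝒳 → ℝ) (Q : 𝒳 → 𝒴 → ℝ) (y : 𝒴) : ℝ :=
  ∑ x, P x * Q x y

noncomputable def mutualInfo [Fintype 𝒴] (P : 𝒳 → ℝ) (Q : 𝒳 → 𝒴 → ℝ) : ℝ :=
  ∑ x, ∑ y, P x * Q x y * Real.logb 2 (Q x y / marginal P Q y)

def expectedDistortion [Fintype 𝒴] (P : 𝒳 → ℝ) (Q : 𝒳 → 𝒴 → ℝ) (d : 𝒳 → 𝒴 → ℝ) : ℝ :=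
  ∑ x, ∑ y, P x * Q x y * d x y

variable {P : 𝒳 → ℝ} {Q V : 𝒳 → 𝒴 → ℝ}

theorem marginal_add_smul (P : 𝒳 → ℝ) (Q V : 𝒳 → 𝒴 → ℝ) (t : ℝ) (y : 𝒴) :
    marginal P (Q + t • V) y = marginal P Q y + t * marginal P V y := by
  simp only [marginal, Pi.add_apply, Pi.smul_apply, smul_eq_mul, mul_sum, ← sum_add_distrib]
  exact sum_congr rfl fun x _ => by ring

theorem expectedDistortion_add_smul [Fintype 𝒴] (P : 𝒳 → ℝ) (Q V d : 𝒳 → 𝒴 → ℝ) (t : ℝ) :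
    expectedDistortion P (Q + t • V) d =
      expectedDistortion P Q d + t * expectedDistortion P V d := by
  simp only [expectedDistortion, Pi.add_apply, Pi.smul_apply, smul_eq_mul, mul_sum,
    ← sum_add_distrib]
  exact sum_congr rfl fun x _ => sum_congr rfl fun y _ => by ring

theorem marginal_pos (hP0 : ∀ x, 0 ≤ P x) (hQ0 : ∀ x y, 0 ≤ Q x y) {x : 𝒳} {y : 𝒴}
    (hPx : 0 < P x) (hQxy : 0 < Q x y) : 0 < marginal P Q y :=
  (mul_pos hPx hQxy).trans_le <|
    single_le_sum (fun x _ => mul_nonneg (hP0 x) (hQ0 x y)) (mem_univ x)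

theorem mul_eq_zero_of_marginal_eq_zero (hP0 : ∀ x, 0 ≤ P x) (hQ0 : ∀ x y, 0 ≤ Q x y)
    {y : 𝒴} (hy : marginal P Q y = 0) (x : 𝒳) : P x * Q x y = 0 :=
  (sum_eq_zero_iff_of_nonneg fun x _ => mul_nonneg (hP0 x) (hQ0 x y)).1 hy x (mem_univ x)

theorem marginal_eq_zero_of_marginal_eq_zero (hP0 : ∀ x, 0 ≤ P x) (hQ0 : ∀ x y, 0 ≤ Q x y)
    (hV0 : ∀ x y, Q x y = 0 → V x y = 0) {y : 𝒴} (hy : marginal P Q y = 0) :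
    marginal P V y = 0 :=
  sum_eq_zero fun x _ => by
    rcases mul_eq_zero.1 (mul_eq_zero_of_marginal_eq_zero hP0 hQ0 hy x) with h | h <;>
      simp [h, hV0 x y]

theorem sum_mul_sub_div_marginal_eq_zero (hP0 : ∀ x, 0 ≤ P x) (hQ0 : ∀ x y, 0 ≤ Q x y)
    (hV0 : ∀ x y, Q x y = 0 → V x y = 0) (y : 𝒴) :
    ∑ x, P x * (V x y - Q x y * marginal P V y / marginal P Q y) = 0 := by
  rcases eq_or_ne (marginal P Q y) 0 with hy | hy
  · simp only [hy, div_zero, sub_zero]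
    exact marginal_eq_zero_of_marginal_eq_zero hP0 hQ0 hV0 hy
  · simp only [mul_sub, sum_sub_distrib, ← mul_div_assoc, ← mul_assoc, ← sum_div, ← sum_mul]
    rw [← marginal, ← marginal, mul_div_cancel_left₀ _ hy, sub_self]


theorem hasDerivAt_mutualInfo_term (hP0 : ∀ x, 0 ≤ P x) (hQ0 : ∀ x y, 0 ≤ Q x y)
    (hV0 : ∀ x y, Q x y = 0 → V x y = 0) (x : 𝒳) (y : 𝒴) :
    HasDerivAt (fun t : ℝ => P x * (Q + t • V) x y *
        Real.logb 2 ((Q + t • V) x y / marginal P (Q + t • V) y))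
      (P x * (V x y * Real.logb 2 (Q x y / marginal P Q y) +
        (V x y - Q x y * marginal P V y / marginal P Q y) / Real.log 2)) 0 := by
  rcases (hP0 x).eq_or_lt with hPx | hPx
  · simpa [← hPx] using hasDerivAt_const (0 : ℝ) (0 : ℝ)
  rcases (hQ0 x y).eq_or_lt with hQxy | hQxy
  · simpa [← hQxy, hV0 x y hQxy.symm] using hasDerivAt_const (0 : ℝ) (0 : ℝ)
  have h := (((hasDerivAt_mul_const (x := 0) (V x y)).const_add (Q x y)).mul_logb_div
    ((hasDerivAt_mul_const (x := 0) (marginal P V y)).const_add (marginal P Q y))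
    (by simpa using hQxy.ne') (by simpa using (marginal_pos hP0 hQ0 hPx hQxy).ne')).const_mul (P x)
  simp only [zero_mul, add_zero] at h
  simpa only [marginal_add_smul, Pi.add_apply, Pi.smul_apply, smul_eq_mul, mul_assoc] using h

variable [Fintype 𝒴]

theorem hasDerivAt_mutualInfo_add_smul (hP0 : ∀ x, 0 ≤ P x) (hQ0 : ∀ x y, 0 ≤ Q x y)
    (hV0 : ∀ x y, Q x y = 0 → V x y = 0) :
    HasDerivAt (fun t : ℝ => mutualInfo P (Q + t • V))
      (∑ x, ∑ y, P x * V x y * Real.logb 2 (Q x y / marginal P Q y)) 0 := by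
  refine (HasDerivAt.fun_sum fun x _ => HasDerivAt.fun_sum fun y _ =>
    hasDerivAt_mutualInfo_term hP0 hQ0 hV0 x y).congr_deriv ?_
  calc ∑ x, ∑ y, P x * (V x y * Real.logb 2 (Q x y / marginal P Q y) +
          (V x y - Q x y * marginal P V y / marginal P Q y) / Real.log 2)
      = ∑ x, ∑ y, P x * V x y * Real.logb 2 (Q x y / marginal P Q y) + (∑ y, ∑ x,
          P x * (V x y - Q x y * marginal P V y / marginal P Q y)) / Real.log 2 := by
        rw [sum_comm (γ := 𝒴), sum_div, ← sum_add_distrib]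
        simp only [sum_div, ← sum_add_distrib, mul_add, mul_assoc, mul_div_assoc]
    _ = ∑ x, ∑ y, P x * V x y * Real.logb 2 (Q x y / marginal P Q y) := by
        simp [sum_mul_sub_div_marginal_eq_zero hP0 hQ0 hV0]

end RateDistortion

open RateDistortion in
theorem rd_first_order_optimality_general {𝒳 𝒴 : Type*} [Fintype 𝒳] [Fintype 𝒴]
    (P : 𝒳 → ℝ) (hP0 : ∀ x, 0 ≤ P x)
    (d : 𝒳 → 𝒴 → ℝ) (lam : ℝ)
    (Q : 𝒳 → 𝒴 → ℝ) (hQ0 : ∀ x y, 0 ≤ Q x y) (hQ1 : ∀ x, ∑ y, Q x y = 1)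
    -- `Q = P_{Y|X}` minimizes `I(X;Y) + λ E[d(X,Y)]` over conditional pmfs:
    (hopt : ∀ Q' : 𝒳 → 𝒴 → ℝ, (∀ x y, 0 ≤ Q' x y) → (∀ x, ∑ y, Q' x y = 1) →
      (∑ x, ∑ y, P x * Q x y * Real.logb 2 (Q x y / (∑ x', P x' * Q x' y)))
          + lam * ∑ x, ∑ y, P x * Q x y * d x y ≤
        (∑ x, ∑ y, P x * Q' x y * Real.logb 2 (Q' x y / (∑ x', P x' * Q' x' y)))
          + lam * ∑ x, ∑ y, P x * Q' x y * d x y)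
    -- tangent direction `V ∈ Tan(P_{Y|X})`:
    (V : 𝒳 → 𝒴 → ℝ) (hV0 : ∀ x y, Q x y = 0 → V x y = 0)
    (hVsum : ∀ x, ∑ y, V x y = 0) :
    ∑ x, ∑ y, P x * V x y *
      (Real.logb 2 (Q x y / (∑ x', P x' * Q x' y)) + lam * d x y) = 0 := by
  have hopt' : ∀ Q' : 𝒳 → 𝒴 → ℝ, (∀ x y, 0 ≤ Q' x y) → (∀ x, ∑ y, Q' x y = 1) →
      mutualInfo P Q + lam * expectedDistortion P Q d ≤
        mutualInfo P Q' + lam * expectedDistortion P Q' d := hopt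
  set F : ℝ → ℝ := fun t =>
    mutualInfo P (Q + t • V) + lam * expectedDistortion P (Q + t • V) d
  have hmin : IsLocalMin F 0 := by
    filter_upwards [eventually_nonneg_add_smul hQ0 hV0] with t ht
    have hsum : ∀ x, ∑ y, (Q + t • V) x y = 1 := fun x => by
      simp [sum_add_distrib, ← mul_sum, hQ1, hVsum]
    simpa only [F, zero_smul, add_zero] using hopt' _ ht hsum
  have hF : HasDerivAt F (∑ x, ∑ y, P x * V x y * Real.logb 2 (Q x y / marginal P Q y) +
      lam * expectedDistortion P V d) 0 := by
    refine (hasDerivAt_mutualInfo_add_smul hP0 hQ0 hV0).add ?_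
    simp only [expectedDistortion_add_smul]
    exact ((hasDerivAt_mul_const _).const_add _).const_mul lam
  change ∑ x, ∑ y, P x * V x y * (Real.logb 2 (Q x y / marginal P Q y) + lam * d x y) = 0
  rw [← hmin.hasDerivAt_eq_zero hF, expectedDistortion, mul_sum]
  simp only [mul_sum, ← sum_add_distrib, mul_add]
  exact sum_congr rfl fun x _ => sum_congr rfl fun y _ => by ring

/-- first-order optimality identity for rate-distortion: if
`P_{Y|X}` minimizes `I(X;Y) + λ E[d(X,Y)]` over conditional pmfs from `𝒳` to
`𝒴`, then for every tangent direction `V ∈ Tan(P_{Y|X})`,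
`∑_{x,y} P_X x · V(y|x) · (ι_{X;Y}(x;y) + λ d(x,y)) = 0`, where
`ι_{X;Y}(x;y) = log₂ (P_{Y|X}(y|x) / P_Y y)`. -/
theorem rd_first_order_optimality {𝒳 𝒴 : Type*} [Fintype 𝒳] [Fintype 𝒴]
    (P : 𝒳 → ℝ) (hP0 : ∀ x, 0 ≤ P x) (hP1 : ∑ x, P x = 1)
    (d : 𝒳 → 𝒴 → ℝ) (lam : ℝ) (hlam : 0 < lam)
    (Q : 𝒳 → 𝒴 → ℝ) (hQ0 : ∀ x y, 0 ≤ Q x y) (hQ1 : ∀ x, ∑ y, Q x y = 1)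
    -- `Q = P_{Y|X}` minimizes `I(X;Y) + λ E[d(X,Y)]` over conditional pmfs:
    (hopt : ∀ Q' : 𝒳 → 𝒴 → ℝ, (∀ x y, 0 ≤ Q' x y) → (∀ x, ∑ y, Q' x y = 1) →
      (∑ x, ∑ y, P x * Q x y * Real.logb 2 (Q x y / (∑ x', P x' * Q x' y)))
          + lam * ∑ x, ∑ y, P x * Q x y * d x y ≤
        (∑ x, ∑ y, P x * Q' x y * Real.logb 2 (Q' x y / (∑ x', P x' * Q' x' y)))
          + lam * ∑ x, ∑ y, P x * Q' x y * d x y)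
    -- tangent direction `V ∈ Tan(P_{Y|X})`:
    (V : 𝒳 → 𝒴 → ℝ) (hV0 : ∀ x y, Q x y = 0 → V x y = 0)
    (hVsum : ∀ x, ∑ y, V x y = 0) :
    ∑ x, ∑ y, P x * V x y *
      (Real.logb 2 (Q x y / (∑ x', P x' * Q x' y)) + lam * d x y) = 0 :=
  rd_first_order_optimality_general P hP0 d lam Q hQ0 hQ1 hopt V hV0 hVsum
end

section
/- Let $f : \mathbb{R}^2 \to (0,\infty)$ be the density of a nondegenerate centered bivariate Gaussian, and let $F(x,y) = \int_{-\infty}^x \int_{-\infty}^y f(s,t)\,dt\,ds$ be its cumulative distribution function. Then the function $(x,y) \mapsto \log F(x,y)$ is concave on $\mathbb{R}^2$. -/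
/-!
Writing `F(x, y) = ∫_{s ≤ x} ∫_{u ≤ y} f(s, u)`, the inner integrand `(y, s, u) ↦ 1_{u ≤ y} f(s, u)`
is log-concave: `log f` is a concave quadratic and `{u ≤ y}` is a half-space. By Prékopa's
theorem, integrating out one variable of a log-concave function keeps it log-concave, so
`(y, s) ↦ ∫_{u ≤ y} f(s, u)` is log-concave, and the same step in `s` gives log-concavity of `F`.
Prékopa's theorem with a one-dimensional fibre is the one-dimensional Prékopa–Leindler
inequality, which follows from the one-dimensional Brunn–Minkowski inequality
`|A| + |B| ≤ |A + B|` applied to superlevel sets and integrated by the layer-cake formula.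
Gaussian tails give the integrability and boundedness these steps need.
-/

open MeasureTheory Set Real Pointwise

theorem Real.volume_add_volume_le_of_isCompact {K L : Set ℝ} (hK : IsCompact K) (hL : IsCompact L)
    (hK₀ : K.Nonempty) (hL₀ : L.Nonempty) : volume K + volume L ≤ volume (K + L) := by
  have hm : sInf K ∈ K := hK.sInf_mem hK₀
  have hM : sSup L ∈ L := hL.sSup_mem hL₀
  -- `K + sup L` and `inf K + L` lie in `K + L` and meet only at `inf K + sup L`.
  have hinter : (K + {sSup L}) ∩ ({sInf K} + L) ⊆ {sInf K + sSup L} := by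
    rintro _ ⟨⟨x, hx, _, rfl, rfl⟩, ⟨_, rfl, y, hy, hxy⟩⟩
    have := csInf_le hK.bddBelow hx
    have := le_csSup hL.bddAbove hy
    rw [mem_singleton_iff]
    linarith
  have hmeas : MeasurableSet ({sInf K} + L) := (isCompact_singleton.add hL).isClosed.measurableSet
  calc volume K + volume L = volume (K + {sSup L}) + volume ({sInf K} + L) := by
        rw [add_singleton, singleton_add, image_add_right, image_add_left,
          measure_preimage_add_right, measure_preimage_add]
    _ = volume ((K + {sSup L}) ∪ ({sInf K} + L)) := by
        rw [← measure_union_add_inter _ hmeas, measure_mono_null hinter (measure_singleton _),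
          add_zero]
    _ ≤ volume (K + L) :=
        measure_mono (union_subset (add_subset_add_left (singleton_subset_iff.2 hM))
          (add_subset_add_right (singleton_subset_iff.2 hm)))

theorem Real.volume_add_volume_le {A B : Set ℝ} (hA : MeasurableSet A) (hB : MeasurableSet B)
    (hA₀ : A.Nonempty) (hB₀ : B.Nonempty) : volume A + volume B ≤ volume (A + B) := by
  obtain ⟨a, ha⟩ := hA₀
  obtain ⟨b, hb⟩ := hB₀
  rw [hA.measure_eq_iSup_isCompact, hB.measure_eq_iSup_isCompact]
  simp only [iSup_and']
  refine ENNReal.biSup_add_biSup_le' ⟨∅, empty_subset _, isCompact_empty⟩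
    ⟨∅, empty_subset _, isCompact_empty⟩ fun K hK L hL => ?_
  calc volume K + volume L ≤ volume (insert a K) + volume (insert b L) :=
        add_le_add (measure_mono (subset_insert _ _)) (measure_mono (subset_insert _ _))
    _ ≤ volume (insert a K + insert b L) :=
        Real.volume_add_volume_le_of_isCompact (hK.2.insert a) (hL.2.insert b)
          (insert_nonempty _ _) (insert_nonempty _ _)
    _ ≤ volume (A + B) :=
        measure_mono (add_subset_add (insert_subset ha hK.1) (insert_subset hb hL.1))

theorem Real.prekopaLeindler_additive_lintegral {t : ℝ} (ht₀ : 0 < t) (ht₁ : t < 1) {f g h : ℝ → ℝ}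
    (hf : Measurable f) (hg : Measurable g) (hh : Measurable h)
    (hf₀ : 0 ≤ f) (hg₀ : 0 ≤ g) (hh₀ : 0 ≤ h)
    (hfb : BddAbove (range f)) (hgb : BddAbove (range g)) (hfg : ⨆ x, f x = ⨆ y, g y)
    (hfgh : ∀ x y, f x ^ (1 - t) * g y ^ t ≤ h ((1 - t) * x + t * y)) :
    ENNReal.ofReal (1 - t) * (∫⁻ x, ENNReal.ofReal (f x)) +
      ENNReal.ofReal t * (∫⁻ y, ENNReal.ofReal (g y)) ≤ ∫⁻ z, ENNReal.ofReal (h z) := by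
  -- Since `f` and `g` have the same supremum, their superlevel sets at `u` are both empty or
  -- both nonempty.
  have hlevel : ∀ u ∈ Ioi (0 : ℝ), ENNReal.ofReal (1 - t) * volume {x | u < f x} +
      ENNReal.ofReal t * volume {y | u < g y} ≤ volume {z | u < h z} := by
    intro u (hu : 0 < u)
    by_cases hfu : ∃ x, u < f x
    · obtain ⟨x, hx⟩ := hfu
      obtain ⟨y, hy⟩ : ∃ y, u < g y := by
        rw [← lt_ciSup_iff hgb, ← hfg, lt_ciSup_iff hfb]; exact ⟨x, hx⟩
      have hsub : (1 - t) • {x | u < f x} + t • {y | u < g y} ⊆ {z | u < h z} := by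
        rintro _ ⟨_, ⟨x, hx, rfl⟩, _, ⟨y, hy, rfl⟩, rfl⟩
        calc u = u ^ (1 - t) * u ^ t := by rw [← rpow_add hu, sub_add_cancel, rpow_one]
          _ < f x ^ (1 - t) * g y ^ t :=
              mul_lt_mul'' (rpow_lt_rpow hu.le hx (by linarith)) (rpow_lt_rpow hu.le hy ht₀)
                (by positivity) (by positivity)
          _ ≤ h ((1 - t) • x + t • y) := hfgh x y
      calc ENNReal.ofReal (1 - t) * volume {x | u < f x} +
            ENNReal.ofReal t * volume {y | u < g y}
          = volume ((1 - t) • {x | u < f x}) + volume (t • {y | u < g y}) := by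
            rw [Measure.addHaar_smul_of_nonneg _ (by linarith),
              Measure.addHaar_smul_of_nonneg _ ht₀.le]
            simp
        _ ≤ volume ((1 - t) • {x | u < f x} + t • {y | u < g y}) :=
            Real.volume_add_volume_le ((measurableSet_lt measurable_const hf).const_smul₀ _)
              ((measurableSet_lt measurable_const hg).const_smul₀ _)
              ⟨_, smul_mem_smul_set (a := 1 - t) (show x ∈ {x | u < f x} from hx)⟩
              ⟨_, smul_mem_smul_set (a := t) (show y ∈ {y | u < g y} from hy)⟩
        _ ≤ volume {z | u < h z} := measure_mono hsub
    · have hgu : ¬ ∃ y, u < g y := by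
        rwa [← lt_ciSup_iff hgb, ← hfg, lt_ciSup_iff hfb]
      have hA : {x | u < f x} = ∅ := eq_empty_of_forall_notMem fun x hx => hfu ⟨x, hx⟩
      have hB : {y | u < g y} = ∅ := eq_empty_of_forall_notMem fun y hy => hgu ⟨y, hy⟩
      simp [hA, hB]
  have hAm : Measurable fun u => volume {x | u < f x} :=
    Antitone.measurable fun u v huv => measure_mono fun x hx => huv.trans_lt hx
  have hBm : Measurable fun u => volume {y | u < g y} :=
    Antitone.measurable fun u v huv => measure_mono fun y hy => huv.trans_lt hy
  rw [lintegral_eq_lintegral_meas_lt volume (ae_of_all _ hf₀) hf.aemeasurable,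
    lintegral_eq_lintegral_meas_lt volume (ae_of_all _ hg₀) hg.aemeasurable,
    lintegral_eq_lintegral_meas_lt volume (ae_of_all _ hh₀) hh.aemeasurable,
    ← lintegral_const_mul _ hAm, ← lintegral_const_mul _ hBm,
    ← lintegral_add_left (hAm.const_mul _)]
  exact setLIntegral_mono' measurableSet_Ioi hlevel

theorem Real.prekopaLeindler_additive {t : ℝ} (ht₀ : 0 < t) (ht₁ : t < 1) {f g h : ℝ → ℝ}
    (hf : Measurable f) (hg : Measurable g) (hh : Measurable h)
    (hf₀ : 0 ≤ f) (hg₀ : 0 ≤ g) (hh₀ : 0 ≤ h)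
    (hfi : Integrable f) (hgi : Integrable g) (hhi : Integrable h)
    (hfb : BddAbove (range f)) (hgb : BddAbove (range g)) (hfg : ⨆ x, f x = ⨆ y, g y)
    (hfgh : ∀ x y, f x ^ (1 - t) * g y ^ t ≤ h ((1 - t) * x + t * y)) :
    (1 - t) * (∫ x, f x) + t * (∫ y, g y) ≤ ∫ z, h z := by
  have key := Real.prekopaLeindler_additive_lintegral ht₀ ht₁ hf hg hh hf₀ hg₀ hh₀ hfb hgb hfg hfgh
  rwa [← ofReal_integral_eq_lintegral_ofReal hfi (ae_of_all _ hf₀),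
    ← ofReal_integral_eq_lintegral_ofReal hgi (ae_of_all _ hg₀),
    ← ofReal_integral_eq_lintegral_ofReal hhi (ae_of_all _ hh₀),
    ← ENNReal.ofReal_mul (by linarith), ← ENNReal.ofReal_mul ht₀.le,
    ← ENNReal.ofReal_add (mul_nonneg (by linarith) (integral_nonneg hf₀))
      (mul_nonneg ht₀.le (integral_nonneg hg₀)),
    ENNReal.ofReal_le_ofReal_iff (integral_nonneg hh₀)] at key

theorem Real.prekopaLeindler {t : ℝ} (ht₀ : 0 < t) (ht₁ : t < 1) {f g h : ℝ → ℝ}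
    (hf : Measurable f) (hg : Measurable g) (hh : Measurable h) (hf₀ : 0 ≤ f) (hg₀ : 0 ≤ g)
    (hfi : Integrable f) (hgi : Integrable g) (hhi : Integrable h)
    (hfb : BddAbove (range f)) (hgb : BddAbove (range g))
    (hfgh : ∀ x y, f x ^ (1 - t) * g y ^ t ≤ h ((1 - t) * x + t * y)) :
    (∫ x, f x) ^ (1 - t) * (∫ y, g y) ^ t ≤ ∫ z, h z := by
  have hs₀ : 0 < 1 - t := by linarith
  have hh₀ : 0 ≤ h := fun z => by
    have hz := hfgh z z
    rw [← add_mul, sub_add_cancel, one_mul] at hz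
    exact (mul_nonneg (rpow_nonneg (hf₀ z) _) (rpow_nonneg (hg₀ z) _)).trans hz
  rcases (integral_nonneg hf₀).eq_or_lt with hIf | hIf
  · rw [← hIf, zero_rpow hs₀.ne', zero_mul]; exact integral_nonneg hh₀
  rcases (integral_nonneg hg₀).eq_or_lt with hIg | hIg
  · rw [← hIg, zero_rpow ht₀.ne', mul_zero]; exact integral_nonneg hh₀
  -- Rescale `f` and `g` to supremum `1` and apply the additive form to the rescaled functions.
  set Mf := ⨆ x, f x
  set Mg := ⨆ y, g y
  have hMf : 0 < Mf := lt_of_not_ge fun h =>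
    hIf.not_ge (integral_nonpos fun x => (le_ciSup hfb x).trans h)
  have hMg : 0 < Mg := lt_of_not_ge fun h =>
    hIg.not_ge (integral_nonpos fun y => (le_ciSup hgb y).trans h)
  set D := Mf ^ (1 - t) * Mg ^ t
  have hD : 0 < D := by positivity
  have key := Real.prekopaLeindler_additive ht₀ ht₁ (hf.const_mul Mf⁻¹) (hg.const_mul Mg⁻¹)
    (hh.const_mul D⁻¹) (fun x => mul_nonneg (inv_nonneg.2 hMf.le) (hf₀ x))
    (fun y => mul_nonneg (inv_nonneg.2 hMg.le) (hg₀ y))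
    (fun z => mul_nonneg (inv_nonneg.2 hD.le) (hh₀ z))
    (hfi.const_mul _) (hgi.const_mul _) (hhi.const_mul _)
    ⟨1, by rintro _ ⟨x, rfl⟩; exact inv_mul_le_one_of_le₀ (le_ciSup hfb x) hMf.le⟩
    ⟨1, by rintro _ ⟨y, rfl⟩; exact inv_mul_le_one_of_le₀ (le_ciSup hgb y) hMg.le⟩
    (by rw [← Real.mul_iSup_of_nonneg (inv_nonneg.2 hMf.le),
      ← Real.mul_iSup_of_nonneg (inv_nonneg.2 hMg.le), inv_mul_cancel₀ hMf.ne',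
      inv_mul_cancel₀ hMg.ne'])
    (fun x y => by
      rw [mul_rpow (by positivity) (hf₀ x), mul_rpow (by positivity) (hg₀ y), inv_rpow hMf.le,
        inv_rpow hMg.le, mul_mul_mul_comm, ← mul_inv]
      exact mul_le_mul_of_nonneg_left (hfgh x y) (by positivity))
  rw [integral_const_mul, integral_const_mul, integral_const_mul] at key
  calc (∫ x, f x) ^ (1 - t) * (∫ y, g y) ^ t
      = D * ((Mf⁻¹ * ∫ x, f x) ^ (1 - t) * (Mg⁻¹ * ∫ y, g y) ^ t) := by
        rw [mul_rpow (by positivity) hIf.le, mul_rpow (by positivity) hIg.le, inv_rpow hMf.le,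
          inv_rpow hMg.le]
        simp only [D]
        field_simp
    _ ≤ D * ((1 - t) * (Mf⁻¹ * ∫ x, f x) + t * (Mg⁻¹ * ∫ y, g y)) := by
        gcongr
        exact geom_mean_le_arith_mean2_weighted hs₀.le ht₀.le (by positivity) (by positivity)
          (by ring)
    _ ≤ D * (D⁻¹ * ∫ z, h z) := by gcongr
    _ = ∫ z, h z := mul_inv_cancel_left₀ hD.ne' _

/-- Log-concavity in multiplicative form, so that `f` may vanish (as indicators of convex sets
do) without meeting the junk value `log 0 = 0`. -/
structure IsLogConcave {E : Type*} [AddCommGroup E] [Module ℝ E] (f : E → ℝ) : Prop where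
  nonneg : ∀ x, 0 ≤ f x
  rpow_mul_rpow_le : ∀ x y : E, ∀ ⦃t : ℝ⦄, 0 < t → t < 1 →
    f x ^ (1 - t) * f y ^ t ≤ f ((1 - t) • x + t • y)

namespace IsLogConcave

variable {E F : Type*} [AddCommGroup E] [Module ℝ E] [AddCommGroup F] [Module ℝ F]

theorem comp_linearMap {f : E → ℝ} (hf : IsLogConcave f) (L : F →ₗ[ℝ] E) :
    IsLogConcave (f ∘ L) where
  nonneg x := hf.nonneg (L x)
  rpow_mul_rpow_le x y t ht₀ ht₁ := by simpa using hf.rpow_mul_rpow_le (L x) (L y) ht₀ ht₁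

theorem indicator {f : E → ℝ} (hf : IsLogConcave f) {s : Set E} (hs : Convex ℝ s) :
    IsLogConcave (s.indicator f) where
  nonneg := indicator_nonneg fun x _ => hf.nonneg x
  rpow_mul_rpow_le x y t ht₀ ht₁ := by
    have hz : 0 ≤ s.indicator f ((1 - t) • x + t • y) := indicator_nonneg (fun x _ => hf.nonneg x) _
    by_cases hx : x ∈ s
    · by_cases hy : y ∈ s
      · rw [indicator_of_mem hx, indicator_of_mem hy,
          indicator_of_mem (hs hx hy (by linarith) ht₀.le (by ring))]
        exact hf.rpow_mul_rpow_le x y ht₀ ht₁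
      · rwa [indicator_of_notMem hy, zero_rpow ht₀.ne', mul_zero]
    · rwa [indicator_of_notMem hx, zero_rpow (by linarith), zero_mul]

/-- Prékopa's theorem with a one-dimensional fibre. -/
theorem integral_snd {φ : E × ℝ → ℝ} (hφ : IsLogConcave φ)
    (hm : ∀ p, Measurable fun u => φ (p, u)) (hi : ∀ p, Integrable fun u => φ (p, u))
    (hb : ∀ p, BddAbove (range fun u => φ (p, u))) : IsLogConcave fun p => ∫ u, φ (p, u) where
  nonneg p := integral_nonneg fun u => hφ.nonneg _
  rpow_mul_rpow_le p q t ht₀ ht₁ :=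
    Real.prekopaLeindler ht₀ ht₁ (hm p) (hm q) (hm _) (fun u => hφ.nonneg _)
      (fun u => hφ.nonneg _) (hi p) (hi q) (hi _) (hb p) (hb q) fun u v => by
        simpa using hφ.rpow_mul_rpow_le (p, u) (q, v) ht₀ ht₁

theorem concaveOn_log {f : E → ℝ} (hf : IsLogConcave f) (hpos : ∀ x, 0 < f x) :
    ConcaveOn ℝ univ fun x => log (f x) := by
  refine ⟨convex_univ, fun x _ y _ s t hs ht hst => ?_⟩
  rcases hs.eq_or_lt with rfl | hs
  · simp_all
  rcases ht.eq_or_lt with rfl | ht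
  · simp_all
  obtain rfl : s = 1 - t := by linarith
  have hxy := hf.rpow_mul_rpow_le x y ht (by linarith)
  calc (1 - t) • log (f x) + t • log (f y) = log (f x ^ (1 - t) * f y ^ t) := by
        rw [log_mul (rpow_pos_of_pos (hpos x) _).ne' (rpow_pos_of_pos (hpos y) _).ne',
          log_rpow (hpos x), log_rpow (hpos y), smul_eq_mul, smul_eq_mul]
    _ ≤ log (f ((1 - t) • x + t • y)) :=
        log_le_log (mul_pos (rpow_pos_of_pos (hpos x) _) (rpow_pos_of_pos (hpos y) _)) hxy

end IsLogConcave

theorem isLogConcave_const_mul_exp {E : Type*} [AddCommGroup E] [Module ℝ E] {C : ℝ} {g : E → ℝ}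
    (hC : 0 ≤ C) (hg : ConcaveOn ℝ univ g) : IsLogConcave fun x => C * exp (g x) where
  nonneg x := by positivity
  rpow_mul_rpow_le x y t ht₀ ht₁ := by
    have hgxy := hg.2 (mem_univ x) (mem_univ y) (by linarith : 0 ≤ 1 - t) ht₀.le (by ring)
    calc (C * exp (g x)) ^ (1 - t) * (C * exp (g y)) ^ t
        = C ^ (1 - t) * C ^ t * exp ((1 - t) • g x + t • g y) := by
          rw [mul_rpow hC (exp_nonneg _), mul_rpow hC (exp_nonneg _), ← exp_mul, ← exp_mul,
            smul_eq_mul, smul_eq_mul, exp_add]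
          ring_nf
      _ = C * exp ((1 - t) • g x + t • g y) := by
          rw [← rpow_add' hC (by norm_num), sub_add_cancel, rpow_one]
      _ ≤ C * exp (g ((1 - t) • x + t • y)) := by gcongr

/-- The free variable moves to the second slot, so that
`partialCDF (partialCDF ψ) (x, y) = ∫_{s ≤ x} ∫_{u ≤ y} ψ (s, u)`. -/
noncomputable def partialCDF (ψ : ℝ × ℝ → ℝ) (p : ℝ × ℝ) : ℝ := ∫ u in Iic p.1, ψ (p.2, u)

section partialCDF

variable {ψ : ℝ × ℝ → ℝ}

noncomputable def partialCDFIntegrand (ψ : ℝ × ℝ → ℝ) : (ℝ × ℝ) × ℝ → ℝ :=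
  {q | q.2 ≤ q.1.1}.indicator fun q => ψ (q.1.2, q.2)

theorem partialCDF_eq_integral (ψ : ℝ × ℝ → ℝ) (p : ℝ × ℝ) :
    partialCDF ψ p = ∫ u, partialCDFIntegrand ψ (p, u) := by
  rw [partialCDF, ← integral_indicator measurableSet_Iic]
  rfl

theorem measurable_partialCDF (hψ : Measurable ψ) : Measurable (partialCDF ψ) := by
  have hm : Measurable (partialCDFIntegrand ψ) :=
    (hψ.comp (by fun_prop)).indicator (measurableSet_le measurable_snd (by fun_prop))
  simpa only [funext (partialCDF_eq_integral ψ)] using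
    (hm.stronglyMeasurable.integral_prod_right' (ν := volume)).measurable

theorem IsLogConcave.partialCDF (hψ : IsLogConcave ψ) (hm : ∀ b, Measurable fun u => ψ (b, u))
    (hi : ∀ b, Integrable fun u => ψ (b, u)) (hb : ∀ b, BddAbove (range fun u => ψ (b, u))) :
    IsLogConcave (partialCDF ψ) := by
  let L : (ℝ × ℝ) × ℝ →ₗ[ℝ] ℝ × ℝ :=
    ((LinearMap.snd ℝ ℝ ℝ).comp (LinearMap.fst ℝ _ ℝ)).prod (LinearMap.snd ℝ _ ℝ)
  have hconv : Convex ℝ {q : (ℝ × ℝ) × ℝ | q.2 ≤ q.1.1} := by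
    rintro x (hx : x.2 ≤ x.1.1) y (hy : y.2 ≤ y.1.1) s t hs ht -
    show (s • x + t • y).2 ≤ (s • x + t • y).1.1
    simp only [Prod.fst_add, Prod.snd_add, Prod.smul_fst, Prod.smul_snd, smul_eq_mul]
    exact add_le_add (mul_le_mul_of_nonneg_left hx hs) (mul_le_mul_of_nonneg_left hy ht)
  have hslice (p : ℝ × ℝ) :
      (fun u => partialCDFIntegrand ψ (p, u)) = (Iic p.1).indicator fun u => ψ (p.2, u) := rfl
  have hlc : IsLogConcave (partialCDFIntegrand ψ) := (hψ.comp_linearMap L).indicator hconv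
  simpa only [← partialCDF_eq_integral] using hlc.integral_snd
    (fun p => by rw [hslice]; exact (hm p.2).indicator measurableSet_Iic)
    (fun p => by rw [hslice]; exact (hi p.2).indicator measurableSet_Iic)
    (fun p => by
      rw [hslice]
      obtain ⟨M, hM⟩ := hb p.2
      refine ⟨M, ?_⟩
      rintro _ ⟨u, rfl⟩
      exact (indicator_le_self' (fun u _ => hψ.nonneg _) u).trans (hM ⟨u, rfl⟩))

end partialCDF

section Dominated

variable {ψ : ℝ × ℝ → ℝ} {k : ℝ → ℝ}

theorem integrable_of_le_const_mul {φ : ℝ → ℝ} {c : ℝ} (hm : Measurable φ) (h₀ : 0 ≤ φ)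
    (hk : Integrable k) (hle : ∀ u, φ u ≤ c * k u) : Integrable φ :=
  (hk.const_mul c).mono' hm.aestronglyMeasurable
    (ae_of_all _ fun u => by rw [norm_of_nonneg (h₀ u)]; exact hle u)

theorem bddAbove_range_of_le_const_mul {φ : ℝ → ℝ} {c : ℝ} (hc : 0 ≤ c)
    (hkb : BddAbove (range k)) (hle : ∀ u, φ u ≤ c * k u) : BddAbove (range φ) := by
  obtain ⟨M, hM⟩ := hkb
  refine ⟨c * M, ?_⟩
  rintro _ ⟨u, rfl⟩
  exact (hle u).trans (mul_le_mul_of_nonneg_left (hM ⟨u, rfl⟩) hc)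

theorem integrable_of_le_mul_self (hm : Measurable ψ) (hψ₀ : 0 ≤ ψ) (hk : Integrable k)
    (hle : ∀ p, ψ p ≤ k p.1 * k p.2) : Integrable ψ := by
  refine Integrable.mono' (g := fun p => k p.1 * k p.2) ?_ hm.aestronglyMeasurable
    (ae_of_all _ fun p => by rw [norm_of_nonneg (hψ₀ p)]; exact hle p)
  rw [Measure.volume_eq_prod]
  exact hk.mul_prod hk

theorem partialCDF_le (hψ₀ : 0 ≤ ψ) (hk₀ : 0 ≤ k) (hk : Integrable k)
    (hle : ∀ p, ψ p ≤ k p.1 * k p.2) (p : ℝ × ℝ) : partialCDF ψ p ≤ (∫ u, k u) * k p.2 :=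
  calc partialCDF ψ p ≤ ∫ u in Iic p.1, k p.2 * k u :=
        integral_mono_of_nonneg (ae_of_all _ fun u => hψ₀ _) (hk.const_mul _).integrableOn
          (ae_of_all _ fun u => hle _)
    _ ≤ ∫ u, k p.2 * k u :=
        setIntegral_le_integral (hk.const_mul _) (ae_of_all _ fun u => mul_nonneg (hk₀ _) (hk₀ _))
    _ = (∫ u, k u) * k p.2 := by rw [integral_const_mul, mul_comm]

theorem setIntegral_Iic_eq_partialCDF_partialCDF (hψ : Integrable ψ) (p : ℝ × ℝ) :
    ∫ q in Iic p, ψ q = partialCDF (partialCDF ψ) p := by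
  rw [Measure.volume_eq_prod] at hψ
  rw [Iic_prod_eq, Measure.volume_eq_prod, setIntegral_prod _ hψ.integrableOn]
  rfl

theorem setIntegral_Iic_pos (hψ : ∀ p, 0 < ψ p) (hi : Integrable ψ) (p : ℝ × ℝ) :
    0 < ∫ q in Iic p, ψ q := by
  have hsupp : Function.support ψ = univ := eq_univ_of_forall fun p => (hψ p).ne'
  rw [setIntegral_pos_iff_support_of_nonneg_ae (ae_of_all _ fun q => (hψ q).le) hi.integrableOn,
    hsupp, univ_inter, Iic_prod_eq, Measure.volume_eq_prod, Measure.prod_prod, Real.volume_Iic]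
  simp

theorem isLogConcave_setIntegral_Iic (hψ : IsLogConcave ψ) (hm : Measurable ψ) (hk₀ : 0 ≤ k)
    (hk : Integrable k) (hkb : BddAbove (range k)) (hle : ∀ p, ψ p ≤ k p.1 * k p.2) :
    IsLogConcave fun p => ∫ q in Iic p, ψ q := by
  have hle₁ (s u : ℝ) : ψ (s, u) ≤ k s * k u := hle (s, u)
  have hle₂ (y s : ℝ) : partialCDF ψ (y, s) ≤ (∫ u, k u) * k s :=
    partialCDF_le hψ.nonneg hk₀ hk hle (y, s)
  have hm₁ (s : ℝ) : Measurable fun u => ψ (s, u) := hm.comp measurable_prodMk_left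
  have hm₂ (y : ℝ) : Measurable fun s => partialCDF ψ (y, s) :=
    (measurable_partialCDF hm).comp measurable_prodMk_left
  have hψ₂ : IsLogConcave (partialCDF ψ) := hψ.partialCDF hm₁
    (fun s => integrable_of_le_const_mul (hm₁ s) (fun u => hψ.nonneg _) hk (hle₁ s))
    (fun s => bddAbove_range_of_le_const_mul (hk₀ s) hkb (hle₁ s))
  have hψ₃ : IsLogConcave (partialCDF (partialCDF ψ)) := hψ₂.partialCDF hm₂
    (fun y => integrable_of_le_const_mul (hm₂ y) (fun s => hψ₂.nonneg _) hk (hle₂ y))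
    (fun y => bddAbove_range_of_le_const_mul (integral_nonneg hk₀) hkb (hle₂ y))
  have hi := integrable_of_le_mul_self hm hψ.nonneg hk hle
  simpa only [setIntegral_Iic_eq_partialCDF_partialCDF hi] using hψ₃

end Dominated

def quadForm (a b c : ℝ) (p : ℝ × ℝ) : ℝ := a * p.1 ^ 2 + 2 * b * p.1 * p.2 + c * p.2 ^ 2

section quadForm

variable {a b c : ℝ}

-- `(a + c) Q(p) - (a c - b ^ 2) |p| ^ 2 = (a p₁ + b p₂) ^ 2 + (b p₁ + c p₂) ^ 2`
theorem quadForm_ge (ha : 0 < a) (hc : 0 < c) (p : ℝ × ℝ) :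
    (a * c - b ^ 2) / (a + c) * (p.1 ^ 2 + p.2 ^ 2) ≤ quadForm a b c p := by
  rw [div_mul_eq_mul_div, div_le_iff₀ (by linarith), quadForm]
  nlinarith [sq_nonneg (a * p.1 + b * p.2), sq_nonneg (b * p.1 + c * p.2)]

theorem quadForm_nonneg (ha : 0 < a) (hc : 0 < c) (hdet : b ^ 2 < a * c) (p : ℝ × ℝ) :
    0 ≤ quadForm a b c p :=
  (mul_nonneg (div_nonneg (by linarith) (by linarith)) (by positivity)).trans (quadForm_ge ha hc p)

theorem convexOn_quadForm (hQ : ∀ p, 0 ≤ quadForm a b c p) : ConvexOn ℝ univ (quadForm a b c) := by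
  refine ⟨convex_univ, fun x _ y _ s t hs ht hst => ?_⟩
  obtain rfl : s = 1 - t := by linarith
  have key : (1 - t) * quadForm a b c x + t * quadForm a b c y -
      quadForm a b c ((1 - t) • x + t • y) = (1 - t) * t * quadForm a b c (x - y) := by
    simp only [quadForm, Prod.fst_add, Prod.snd_add, Prod.smul_fst, Prod.smul_snd, Prod.fst_sub,
      Prod.snd_sub, smul_eq_mul]
    ring
  have := mul_nonneg (mul_nonneg hs ht) (hQ (x - y))
  simp only [smul_eq_mul]
  linarith

theorem isLogConcave_gaussian {C : ℝ} (hC : 0 ≤ C) (hQ : ∀ p, 0 ≤ quadForm a b c p) :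
    IsLogConcave fun p => C * exp (-quadForm a b c p / 2) := by
  refine isLogConcave_const_mul_exp hC ?_
  simpa only [Pi.neg_apply, smul_eq_mul, neg_div, inv_mul_eq_div] using
    (convexOn_quadForm hQ).neg.smul (by norm_num : (0 : ℝ) ≤ 2⁻¹)

theorem exists_gaussian_le_mul_self (ha : 0 < a) (hc : 0 < c) (hdet : b ^ 2 < a * c) {C : ℝ}
    (hC : 0 ≤ C) : ∃ k : ℝ → ℝ, 0 ≤ k ∧ Integrable k ∧ BddAbove (range k) ∧
      ∀ p, C * exp (-quadForm a b c p / 2) ≤ k p.1 * k p.2 := by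
  set r := (a * c - b ^ 2) / (a + c) / 2
  have hr : 0 < r := div_pos (div_pos (by linarith) (by linarith)) two_pos
  refine ⟨fun u => √C * exp (-r * u ^ 2), fun u => by positivity,
    (integrable_exp_neg_mul_sq hr).const_mul _, ⟨√C, ?_⟩, fun p => ?_⟩
  · rintro _ ⟨u, rfl⟩
    exact mul_le_of_le_one_right (sqrt_nonneg C) (exp_le_one_iff.2 (by nlinarith [sq_nonneg u]))
  · have hQ := quadForm_ge (b := b) ha hc p
    calc C * exp (-quadForm a b c p / 2) ≤ C * exp (-r * p.1 ^ 2 + -r * p.2 ^ 2) := by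
          gcongr
          simp only [r]
          linarith
      _ = √C * exp (-r * p.1 ^ 2) * (√C * exp (-r * p.2 ^ 2)) := by
          rw [exp_add, mul_mul_mul_comm, mul_self_sqrt hC]

end quadForm

theorem gaussian_cdf_log_concave_general (a b c C : ℝ)
    (ha : 0 < a) (hc : 0 < c) (hdet : b ^ 2 < a * c) (hC : 0 < C)
    (f : ℝ × ℝ → ℝ)
    (hf : ∀ p : ℝ × ℝ,
      f p = C * Real.exp (-(a * p.1 ^ 2 + 2 * b * p.1 * p.2 + c * p.2 ^ 2) / 2))
    (F : ℝ → ℝ → ℝ)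
    (hF : ∀ x y, F x y = ∫ p in {q : ℝ × ℝ | q.1 ≤ x ∧ q.2 ≤ y}, f p) :
    ConcaveOn ℝ Set.univ (fun p : ℝ × ℝ => Real.log (F p.1 p.2)) := by
  obtain rfl : f = fun p => C * exp (-quadForm a b c p / 2) := funext hf
  obtain ⟨k, hk₀, hk, hkb, hle⟩ := exists_gaussian_le_mul_self ha hc hdet hC.le
  have hlc := isLogConcave_gaussian hC.le (quadForm_nonneg ha hc hdet)
  have hm : Measurable fun p => C * exp (-quadForm a b c p / 2) := by unfold quadForm; fun_prop
  have hF' (p : ℝ × ℝ) : F p.1 p.2 = ∫ q in Iic p, C * exp (-quadForm a b c q / 2) := hF p.1 p.2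
  simp only [hF']
  exact (isLogConcave_setIntegral_Iic hlc hm hk₀ hk hkb hle).concaveOn_log
    (setIntegral_Iic_pos (fun p => by positivity) (integrable_of_le_mul_self hm hlc.nonneg hk hle))

/-- the cumulative distribution function
`F(x,y) = ∫_{-∞}^x ∫_{-∞}^y f` of (the density `f` of) a nondegenerate
centered bivariate Gaussian is log-concave on `ℝ²`. -/
theorem gaussian_cdf_log_concave (a b c C : ℝ)
    (ha : 0 < a) (hc : 0 < c) (hdet : b ^ 2 < a * c) (hC : 0 < C)
    (f : ℝ × ℝ → ℝ)
    (hf : ∀ p : ℝ × ℝ,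
      f p = C * Real.exp (-(a * p.1 ^ 2 + 2 * b * p.1 * p.2 + c * p.2 ^ 2) / 2))
    (hnorm : ∫ p, f p = 1)
    (F : ℝ → ℝ → ℝ)
    (hF : ∀ x y, F x y = ∫ p in {q : ℝ × ℝ | q.1 ≤ x ∧ q.2 ≤ y}, f p) :
    ConcaveOn ℝ Set.univ (fun p : ℝ × ℝ => Real.log (F p.1 p.2)) :=
  gaussian_cdf_log_concave_general a b c C ha hc hdet hC f hf F hF
end

section
/- (Comparison of dispersion bounds via law of total variance.) Let $(X, U, Y, Z)$ be random variables on finite sets with $Z$ a function of $(U, Y)$, let $\lambda > 0$, $\iota := \iota(U;X) - \iota(U;Y)$ and $d := d(X,Z)$ for a function $d$. Define $\mathsf{V}_{\mathrm{GCC}} := \mathrm{Var}[\mathbb{E}[\iota + \lambda d \mid X]] + \big( \sqrt{\mathbb{E}[\mathrm{Var}[\iota(U;Y) \mid X,U]]} + \lambda \sqrt{\mathbb{E}[\mathrm{Var}[d \mid X,U]]} \big)^2$ and $\mathsf{V}_{\mathrm{LA}} := \big( \sqrt{\mathrm{Var}[\iota]} + \lambda\sqrt{\mathrm{Var}[d]}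 \big)^2$. Then $\mathsf{V}_{\mathrm{GCC}} \le \mathsf{V}_{\mathrm{LA}}$, provided the first-order optimality condition $\mathbb{E}[\iota + \lambda d \mid X, U] = \mathbb{E}[\iota + \lambda d \mid X]$ holds almost surely. -/
noncomputable section

/-- Expectation on a finite probability space with weights `w`. -/
def pexp {Ω : Type*} [Fintype Ω] (w : Ω → ℝ) (f : Ω → ℝ) : ℝ :=
  ∑ ω, w ω * f ω

/-- Variance on a finite probability space with weights `w`. -/
def pvar {Ω : Type*} [Fintype Ω] (w : Ω → ℝ) (f : Ω → ℝ) : ℝ :=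
  pexp w (fun ω => (f ω - pexp w f) ^ 2)

/-- Conditional expectation `E[f | g]` (as a random variable) on a finite
probability space with weights `w`. -/
def pcexp {Ω α : Type*} [Fintype Ω] [DecidableEq α]
    (w : Ω → ℝ) (g : Ω → α) (f : Ω → ℝ) : Ω → ℝ :=
  fun ω => (∑ ω' ∈ Finset.univ.filter (fun ω' => g ω' = g ω), w ω' * f ω') /
    (∑ ω' ∈ Finset.univ.filter (fun ω' => g ω' = g ω), w ω')

/-- Conditional variance `Var[f | g]` (as a random variable). -/
def pcvar {Ω α : Type*} [Fintype Ω] [DecidableEq α]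
    (w : Ω → ℝ) (g : Ω → α) (f : Ω → ℝ) : Ω → ℝ :=
  pcexp w g (fun ω' => (f ω' - pcexp w g f ω') ^ 2)

/-- Marginal probability `ℙ(g = a)` on a finite probability space. -/
def margProb {Ω α : Type*} [Fintype Ω] [DecidableEq α]
    (w : Ω → ℝ) (g : Ω → α) (a : α) : ℝ :=
  ∑ ω ∈ Finset.univ.filter (fun ω => g ω = a), w ω

section Aux

variable {Ω α β : Type*} [Fintype Ω] [Fintype α] [Fintype β] [DecidableEq α] [DecidableEq β]

lemma sum_mul_pcexp (w : Ω → ℝ) (hw0 : ∀ ω, 0 ≤ w ω) (g : Ω → α) (f : Ω → ℝ)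
    (s : Finset Ω) (hs : ∀ ω ∈ s, ∀ ω', g ω' = g ω → ω' ∈ s) :
    ∑ ω ∈ s, w ω * pcexp w g f ω = ∑ ω ∈ s, w ω * f ω := by
  classical
  rw [← Finset.sum_fiberwise_of_maps_to (t := Finset.univ) (g := g)
        (fun ω _ => Finset.mem_univ (g ω)) (fun ω => w ω * pcexp w g f ω),
      ← Finset.sum_fiberwise_of_maps_to (t := Finset.univ) (g := g)
        (fun ω _ => Finset.mem_univ (g ω)) (fun ω => w ω * f ω)]
  refine Finset.sum_congr rfl (fun a _ => ?_)
  by_cases hne : (s.filter (fun ω => g ω = a)).Nonempty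
  · obtain ⟨ω₀, hω₀⟩ := hne
    rw [Finset.mem_filter] at hω₀
    have hfib : s.filter (fun ω => g ω = a) = Finset.univ.filter (fun ω => g ω = a) := by
      ext ω'
      simp only [Finset.mem_filter, Finset.mem_univ, true_and]
      exact ⟨fun h => h.2, fun h => ⟨hs ω₀ hω₀.1 ω' (h.trans hω₀.2.symm), h⟩⟩
    rw [hfib]
    set D := ∑ ω' ∈ Finset.univ.filter (fun ω' => g ω' = a), w ω' with hD
    by_cases hD0 : D = 0
    · have hz : ∀ ω' ∈ Finset.univ.filter (fun ω' => g ω' = a), w ω' = 0 :=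
        (Finset.sum_eq_zero_iff_of_nonneg (fun i _ => hw0 i)).mp hD0
      rw [Finset.sum_eq_zero (fun ω' h => by rw [hz ω' h, zero_mul]),
          Finset.sum_eq_zero (fun ω' h => by rw [hz ω' h, zero_mul])]
    · have hval : ∀ ω' ∈ Finset.univ.filter (fun ω => g ω = a),
          pcexp w g f ω' =
            (∑ ω'' ∈ Finset.univ.filter (fun ω'' => g ω'' = a), w ω'' * f ω'') / D := by
        intro ω' h
        rw [Finset.mem_filter] at h
        simp only [pcexp, h.2, hD]
      rw [Finset.sum_congr rfl (fun ω' h => by rw [hval ω' h]), ← Finset.sum_mul, ← hD]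
      field_simp
  · rw [Finset.not_nonempty_iff_eq_empty] at hne
    rw [hne]
    simp


lemma pexp_pcexp (w : Ω → ℝ) (hw0 : ∀ ω, 0 ≤ w ω) (g : Ω → α) (f : Ω → ℝ) :
    pexp w (pcexp w g f) = pexp w f := by
  have := sum_mul_pcexp w hw0 g f Finset.univ (fun _ _ ω' _ => Finset.mem_univ ω')
  simpa [pexp] using this

lemma pexp_add (w : Ω → ℝ) (f g : Ω → ℝ) :
    pexp w (fun ω => f ω + g ω) = pexp w f + pexp w g := by
  simp [pexp, mul_add, Finset.sum_add_distrib]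

lemma pexp_const_mul (w : Ω → ℝ) (c : ℝ) (f : Ω → ℝ) :
    pexp w (fun ω => c * f ω) = c * pexp w f := by
  simp only [pexp, Finset.mul_sum]
  exact Finset.sum_congr rfl fun ω _ => by ring

lemma pexp_nonneg (w : Ω → ℝ) (hw0 : ∀ ω, 0 ≤ w ω) {f : Ω → ℝ} (hf : ∀ ω, 0 ≤ f ω) :
    0 ≤ pexp w f :=
  Finset.sum_nonneg fun ω _ => mul_nonneg (hw0 ω) (hf ω)

lemma pvar_nonneg (w : Ω → ℝ) (hw0 : ∀ ω, 0 ≤ w ω) (f : Ω → ℝ) : 0 ≤ pvar w f :=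
  pexp_nonneg w hw0 fun ω => sq_nonneg _

lemma pcexp_sub (w : Ω → ℝ) (g : Ω → α) (f h : Ω → ℝ) (ω : Ω) :
    pcexp w g (fun ω' => f ω' - h ω') ω = pcexp w g f ω - pcexp w g h ω := by
  simp only [pcexp, mul_sub, Finset.sum_sub_distrib, sub_div]

lemma pcexp_nonneg (w : Ω → ℝ) (hw0 : ∀ ω, 0 ≤ w ω) (g : Ω → α) {f : Ω → ℝ}
    (hf : ∀ ω, 0 ≤ f ω) (ω : Ω) : 0 ≤ pcexp w g f ω :=
  div_nonneg (Finset.sum_nonneg fun ω' _ => mul_nonneg (hw0 ω') (hf ω'))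
    (Finset.sum_nonneg fun ω' _ => hw0 ω')

lemma pcexp_eq_self (w : Ω → ℝ) (hw0 : ∀ ω, 0 ≤ w ω) (g : Ω → α) {h : Ω → ℝ}
    (hmeas : ∀ ω ω', g ω = g ω' → h ω = h ω') {ω : Ω} (hw : 0 < w ω) :
    pcexp w g h ω = h ω := by
  have hDpos : 0 < ∑ ω' ∈ Finset.univ.filter (fun ω' => g ω' = g ω), w ω' := by
    have hmem : ω ∈ Finset.univ.filter (fun ω' => g ω' = g ω) := by simp
    calc 0 < w ω := hw
      _ ≤ _ := Finset.single_le_sum (fun i _ => hw0 i) hmem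
  have hnum : ∑ ω' ∈ Finset.univ.filter (fun ω' => g ω' = g ω), w ω' * h ω'
      = (∑ ω' ∈ Finset.univ.filter (fun ω' => g ω' = g ω), w ω') * h ω := by
    rw [Finset.sum_mul]
    refine Finset.sum_congr rfl (fun ω' hω' => ?_)
    rw [Finset.mem_filter] at hω'
    rw [hmeas ω' ω hω'.2]
  rw [pcexp, hnum, mul_comm, mul_div_assoc, div_self hDpos.ne', mul_one]

lemma pcexp_mul_meas (w : Ω → ℝ) (g : Ω → α) {h : Ω → ℝ}
    (hmeas : ∀ ω ω', g ω = g ω' → h ω = h ω') (f : Ω → ℝ) (ω : Ω) :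
    pcexp w g (fun ω' => h ω' * f ω') ω = h ω * pcexp w g f ω := by
  have hnum : ∑ ω' ∈ Finset.univ.filter (fun ω' => g ω' = g ω), w ω' * (h ω' * f ω')
      = h ω * ∑ ω' ∈ Finset.univ.filter (fun ω' => g ω' = g ω), w ω' * f ω' := by
    rw [Finset.mul_sum]
    refine Finset.sum_congr rfl (fun ω' hω' => ?_)
    rw [Finset.mem_filter] at hω'
    rw [hmeas ω' ω hω'.2]; ring
  rw [pcexp, hnum, mul_div_assoc]
  rfl

lemma pexp_mul_pcexp (w : Ω → ℝ) (hw0 : ∀ ω, 0 ≤ w ω) (g : Ω → α) {h : Ω → ℝ}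
    (hmeas : ∀ ω ω', g ω = g ω' → h ω = h ω') (f : Ω → ℝ) :
    pexp w (fun ω => h ω * f ω) = pexp w (fun ω => h ω * pcexp w g f ω) := by
  rw [← pexp_pcexp w hw0 g (fun ω => h ω * f ω)]
  congr 1
  funext ω
  exact pcexp_mul_meas w g hmeas f ω

lemma pcexp_meas (w : Ω → ℝ) (g : Ω → α) (f : Ω → ℝ) {ω ω' : Ω} (h : g ω = g ω') :
    pcexp w g f ω = pcexp w g f ω' := by
  simp only [pcexp, h]

/-- Law of total variance. -/
lemma total_variance (w : Ω → ℝ) (hw0 : ∀ ω, 0 ≤ w ω) (g : Ω → α) (f : Ω → ℝ) :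
    pvar w f = pvar w (pcexp w g f) + pexp w (pcvar w g f) := by
  set Q := pcexp w g f with hQ
  set m := pexp w f with hm
  have hQmeas : ∀ ω ω', g ω = g ω' → Q ω = Q ω' := fun ω ω' h => pcexp_meas w g f h
  have key1 : pexp w Q = m := pexp_pcexp w hw0 g f
  have key2 : pexp w (fun ω => Q ω * f ω) = pexp w (fun ω => Q ω * Q ω) :=
    pexp_mul_pcexp w hw0 g hQmeas f
  have key3 : pexp w (pcvar w g f) = pexp w (fun ω => (f ω - Q ω) ^ 2) :=
    pexp_pcexp w hw0 g _
  have hpt : (fun ω => (f ω - m) ^ 2) = fun ω =>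
      (Q ω - m) ^ 2 + ((f ω - Q ω) ^ 2 + ((2 : ℝ) * (Q ω * f ω) +
        ((-2 : ℝ) * (Q ω * Q ω) + ((2 * m) * Q ω + ((-2) * m) * f ω)))) := by
    funext ω; ring
  have hvf : pvar w f = pexp w (fun ω => (f ω - m) ^ 2) := rfl
  have hvQ : pvar w Q = pexp w (fun ω => (Q ω - m) ^ 2) := by
    rw [pvar, key1]
  rw [hvf, hpt, pexp_add, pexp_add, pexp_add, pexp_add, pexp_add,
    pexp_const_mul, pexp_const_mul, pexp_const_mul, pexp_const_mul,
    key2, key1, ← hm, hvQ, key3]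
  ring

/-- Tower property: conditioning on a coarser grouping. -/
lemma pcexp_tower (w : Ω → ℝ) (hw0 : ∀ ω, 0 ≤ w ω) (X : Ω → β) (g : Ω → α)
    (hc : ∀ ω ω', g ω = g ω' → X ω = X ω') (f : Ω → ℝ) :
    pcexp w X (pcexp w g f) = pcexp w X f := by
  funext ω
  have key := sum_mul_pcexp w hw0 g f (Finset.univ.filter (fun ω' => X ω' = X ω))
    (by
      intro ω₁ hω₁ ω₂ h₂
      rw [Finset.mem_filter] at hω₁ ⊢
      exact ⟨Finset.mem_univ _, (hc ω₂ ω₁ h₂).trans hω₁.2⟩)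
  show (∑ ω' ∈ Finset.univ.filter (fun ω' => X ω' = X ω), w ω' * pcexp w g f ω') /
      (∑ ω' ∈ Finset.univ.filter (fun ω' => X ω' = X ω), w ω') = _
  rw [key]
  rfl

lemma pvar_pcexp_coarse (w : Ω → ℝ) (hw0 : ∀ ω, 0 ≤ w ω) (X : Ω → β) (g : Ω → α)
    (hc : ∀ ω ω', g ω = g ω' → X ω = X ω') (f : Ω → ℝ) :
    pvar w (pcexp w X f) ≤ pvar w (pcexp w g f) := by
  have h := total_variance w hw0 X (pcexp w g f)
  rw [pcexp_tower w hw0 X g hc f] at h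
  have hnn : 0 ≤ pexp w (pcvar w X (pcexp w g f)) :=
    pexp_nonneg w hw0 (fun ω => pcexp_nonneg w hw0 X (fun ω' => sq_nonneg _) ω)
  linarith

/-- Minkowski inequality for the variance seminorm. -/
lemma pvar_add_le (w : Ω → ℝ) (hw0 : ∀ ω, 0 ≤ w ω) (f g : Ω → ℝ) :
    pvar w (fun ω => f ω + g ω) ≤ (Real.sqrt (pvar w f) + Real.sqrt (pvar w g)) ^ 2 := by
  set mf := pexp w f with hmf
  set mg := pexp w g with hmg
  set cov := pexp w (fun ω => (f ω - mf) * (g ω - mg)) with hcov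
  have hsplit : pvar w (fun ω => f ω + g ω) = pvar w f + pvar w g + 2 * cov := by
    have hmsum : pexp w (fun ω => f ω + g ω) = mf + mg := pexp_add w f g
    have h1 : pvar w (fun ω => f ω + g ω) =
        pexp w (fun ω => (f ω - mf) ^ 2 + ((g ω - mg) ^ 2 +
          (2 : ℝ) * ((f ω - mf) * (g ω - mg)))) := by
      rw [pvar, hmsum]
      congr 1
      funext ω
      ring
    rw [h1, pexp_add, pexp_add, pexp_const_mul, ← hcov]
    simp only [pvar]
    rw [← hmf, ← hmg]
    ring
  have hcs : cov ≤ Real.sqrt (pvar w f) * Real.sqrt (pvar w g) := by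
    have h := Real.sum_mul_le_sqrt_mul_sqrt Finset.univ
      (fun ω => Real.sqrt (w ω) * (f ω - mf)) (fun ω => Real.sqrt (w ω) * (g ω - mg))
    have e1 : ∑ ω, (Real.sqrt (w ω) * (f ω - mf)) * (Real.sqrt (w ω) * (g ω - mg)) = cov := by
      rw [hcov, pexp]
      refine Finset.sum_congr rfl fun ω _ => ?_
      have h2 : Real.sqrt (w ω) * Real.sqrt (w ω) = w ω := Real.mul_self_sqrt (hw0 ω)
      linear_combination ((f ω - mf) * (g ω - mg)) * h2
    have e2 : ∑ ω, (Real.sqrt (w ω) * (f ω - mf)) ^ 2 = pvar w f := by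
      refine Finset.sum_congr rfl fun ω _ => ?_
      rw [mul_pow, Real.sq_sqrt (hw0 ω)]
    have e3 : ∑ ω, (Real.sqrt (w ω) * (g ω - mg)) ^ 2 = pvar w g := by
      refine Finset.sum_congr rfl fun ω _ => ?_
      rw [mul_pow, Real.sq_sqrt (hw0 ω)]
    rw [e1, e2, e3] at h
    exact h
  have hsf : Real.sqrt (pvar w f) ^ 2 = pvar w f := Real.sq_sqrt (pvar_nonneg w hw0 f)
  have hsg : Real.sqrt (pvar w g) ^ 2 = pvar w g := Real.sq_sqrt (pvar_nonneg w hw0 g)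
  rw [hsplit]
  nlinarith [hcs, Real.sqrt_nonneg (pvar w f), Real.sqrt_nonneg (pvar w g)]


lemma pcexp_add' (w : Ω → ℝ) (g : Ω → α) (f h : Ω → ℝ) (ω : Ω) :
    pcexp w g (fun ω' => f ω' + h ω') ω = pcexp w g f ω + pcexp w g h ω := by
  simp only [pcexp, mul_add, Finset.sum_add_distrib, add_div]

lemma pvar_const_mul (w : Ω → ℝ) (c : ℝ) (f : Ω → ℝ) :
    pvar w (fun ω => c * f ω) = c ^ 2 * pvar w f := by
  rw [pvar, pexp_const_mul w c f]
  have h2 : (fun ω => (c * f ω - c * pexp w f) ^ 2)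
      = fun ω => c ^ 2 * (f ω - pexp w f) ^ 2 := funext fun ω => by ring
  rw [h2, pexp_const_mul]
  rfl

lemma cauchy2 (a b c d : ℝ) : a * c + b * d ≤
    Real.sqrt (a ^ 2 + b ^ 2) * Real.sqrt (c ^ 2 + d ^ 2) := by
  calc a * c + b * d ≤ |a * c + b * d| := le_abs_self _
    _ = Real.sqrt ((a * c + b * d) ^ 2) := (Real.sqrt_sq_eq_abs _).symm
    _ ≤ Real.sqrt ((a ^ 2 + b ^ 2) * (c ^ 2 + d ^ 2)) :=
        Real.sqrt_le_sqrt (by nlinarith [sq_nonneg (a * d - b * c)])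
    _ = _ := Real.sqrt_mul (by positivity) _

end Aux
set_option maxHeartbeats 1000000 in
/-- comparison of dispersion bounds: with
`ι = ι(U;X) − ι(U;Y)` and `d = d(X,Z)`, `Z = z(U,Y)`, and assuming the
first-order optimality condition `E[ι + λd | X,U] = E[ι + λd | X]` a.s.,
`V_GCC = Var[E[ι + λd | X]] + (√(E Var[ι(U;Y)|X,U]) + λ √(E Var[d|X,U]))²`
is at most `V_LA = (√Var[ι] + λ √Var[d])²`. -/
theorem dispersion_comparison {Ω 𝒳 𝒰 𝒴 𝒵 : Type*}
    [Fintype Ω] [Fintype 𝒳] [Fintype 𝒰] [Fintype 𝒴]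
    [DecidableEq 𝒳] [DecidableEq 𝒰] [DecidableEq 𝒴]
    (w : Ω → ℝ) (hw0 : ∀ ω, 0 ≤ w ω) (hw1 : ∑ ω, w ω = 1)
    (X : Ω → 𝒳) (U : Ω → 𝒰) (Y : Ω → 𝒴)
    (z : 𝒰 → 𝒴 → 𝒵) (dfun : 𝒳 → 𝒵 → ℝ) (lam : ℝ) (hlam : 0 < lam)
    -- information densities of the joint law and the distortion
    (ιUX ιUY ι dd : Ω → ℝ)
    (hιUX : ∀ ω, ιUX ω = Real.logb 2
      (margProb w (fun ω' => (X ω', U ω')) (X ω, U ω) /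
        (margProb w X (X ω) * margProb w U (U ω))))
    (hιUY : ∀ ω, ιUY ω = Real.logb 2
      (margProb w (fun ω' => (U ω', Y ω')) (U ω, Y ω) /
        (margProb w U (U ω) * margProb w Y (Y ω))))
    (hι : ∀ ω, ι ω = ιUX ω - ιUY ω)
    (hdd : ∀ ω, dd ω = dfun (X ω) (z (U ω) (Y ω)))
    -- first-order optimality condition: `E[ι + λd | X,U] = E[ι + λd | X]` a.s.
    (hopt : ∀ ω, 0 < w ω →
      pcexp w (fun ω' => (X ω', U ω')) (fun ω' => ι ω' + lam * dd ω') ω =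
        pcexp w X (fun ω' => ι ω' + lam * dd ω') ω) :
    pvar w (pcexp w X (fun ω' => ι ω' + lam * dd ω')) +
      (Real.sqrt (pexp w (pcvar w (fun ω' => (X ω', U ω')) ιUY)) +
        lam * Real.sqrt (pexp w (pcvar w (fun ω' => (X ω', U ω')) dd))) ^ 2 ≤
    (Real.sqrt (pvar w ι) + lam * Real.sqrt (pvar w dd)) ^ 2 := by
  classical
  set g : Ω → 𝒳 × 𝒰 := fun ω' => (X ω', U ω') with hgdef
  have hgX : ∀ ω ω', g ω = g ω' → X ω = X ω' := fun ω ω' h => congrArg Prod.fst h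
  have hιUXmeas : ∀ ω ω', g ω = g ω' → ιUX ω = ιUX ω' := by
    intro ω ω' h
    have hx : X ω = X ω' := congrArg Prod.fst h
    have hu : U ω = U ω' := congrArg Prod.snd h
    rw [hιUX ω, hιUX ω', hx, hu]
  -- swap ιUY for ι inside the conditional variance term
  have hswap : pexp w (pcvar w g ιUY) = pexp w (pcvar w g ι) := by
    have h1 : pexp w (pcvar w g ιUY)
        = pexp w (fun ω => (ιUY ω - pcexp w g ιUY ω) ^ 2) := pexp_pcexp w hw0 g _
    have h2 : pexp w (pcvar w g ι)
        = pexp w (fun ω => (ι ω - pcexp w g ι ω) ^ 2) := pexp_pcexp w hw0 g _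
    rw [h1, h2]
    simp only [pexp]
    refine Finset.sum_congr rfl fun ω _ => ?_
    rcases eq_or_lt_of_le (hw0 ω) with hw | hw
    · rw [← hw, zero_mul, zero_mul]
    · have hιfun : ι = fun ω' => ιUX ω' - ιUY ω' := funext hι
      have hQι : pcexp w g ι ω = ιUX ω - pcexp w g ιUY ω := by
        have h3 : pcexp w g ι ω = pcexp w g (fun ω' => ιUX ω' - ιUY ω') ω := by
          rw [← hιfun]
        rw [h3, pcexp_sub w g ιUX ιUY ω, pcexp_eq_self w hw0 g hιUXmeas hw]
      congr 1
      rw [hQι, hι ω]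
      ring
  rw [hswap]
  -- abbreviations
  set ti := Real.sqrt (pvar w (pcexp w g ι)) with hti
  set td := Real.sqrt (pvar w (pcexp w g dd)) with htd
  set ri := Real.sqrt (pexp w (pcvar w g ι)) with hri
  set rd := Real.sqrt (pexp w (pcvar w g dd)) with hrd
  set pii := Real.sqrt (pvar w (pcexp w X ι)) with hpii
  set pdd := Real.sqrt (pvar w (pcexp w X dd)) with hpdd
  set A := Real.sqrt (pvar w ι) with hA
  set B := Real.sqrt (pvar w dd) with hB
  have hti2 : ti ^ 2 = pvar w (pcexp w g ι) := Real.sq_sqrt (pvar_nonneg w hw0 _)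
  have htd2 : td ^ 2 = pvar w (pcexp w g dd) := Real.sq_sqrt (pvar_nonneg w hw0 _)
  have hri2 : ri ^ 2 = pexp w (pcvar w g ι) :=
    Real.sq_sqrt (pexp_nonneg w hw0 (fun ω => pcexp_nonneg w hw0 g (fun ω' => sq_nonneg _) ω))
  have hrd2 : rd ^ 2 = pexp w (pcvar w g dd) :=
    Real.sq_sqrt (pexp_nonneg w hw0 (fun ω => pcexp_nonneg w hw0 g (fun ω' => sq_nonneg _) ω))
  have htotι : pvar w ι = ti ^ 2 + ri ^ 2 := by
    rw [hti2, hri2]; exact total_variance w hw0 g ι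
  have htotd : pvar w dd = td ^ 2 + rd ^ 2 := by
    rw [htd2, hrd2]; exact total_variance w hw0 g dd
  have hcontι : pii ≤ ti := Real.sqrt_le_sqrt (pvar_pcexp_coarse w hw0 X g hgX ι)
  have hcontd : pdd ≤ td := Real.sqrt_le_sqrt (pvar_pcexp_coarse w hw0 X g hgX dd)
  -- bound the first term
  have h1 : pvar w (pcexp w X (fun ω' => ι ω' + lam * dd ω')) ≤ (pii + lam * pdd) ^ 2 := by
    have heq : pcexp w X (fun ω' => ι ω' + lam * dd ω')
        = fun ω => pcexp w X ι ω + lam * pcexp w X dd ω := by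
      funext ω
      rw [pcexp_add' w X ι (fun ω' => lam * dd ω') ω,
        pcexp_mul_meas w X (h := fun _ => lam) (fun _ _ _ => rfl) dd ω]
    rw [heq]
    have h2 := pvar_add_le w hw0 (pcexp w X ι) (fun ω => lam * pcexp w X dd ω)
    have h3 : pvar w (fun ω => lam * pcexp w X dd ω)
        = lam ^ 2 * pvar w (pcexp w X dd) := pvar_const_mul w lam (pcexp w X dd)
    rw [h3, Real.sqrt_mul (sq_nonneg lam), Real.sqrt_sq hlam.le] at h2
    exact h2
  -- Cauchy–Schwarz in two dimensions
  have hAB : ti * td + ri * rd ≤ A * B := by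
    rw [hA, hB, htotι, htotd]
    exact cauchy2 ti ri td rd
  have hA2 : A ^ 2 = ti ^ 2 + ri ^ 2 := by
    rw [hA, Real.sq_sqrt (pvar_nonneg w hw0 ι), htotι]
  have hB2 : B ^ 2 = td ^ 2 + rd ^ 2 := by
    rw [hB, Real.sq_sqrt (pvar_nonneg w hw0 dd), htotd]
  have hnn : 0 ≤ ti ∧ 0 ≤ td ∧ 0 ≤ ri ∧ 0 ≤ rd ∧ 0 ≤ pii ∧ 0 ≤ pdd :=
    ⟨Real.sqrt_nonneg _, Real.sqrt_nonneg _, Real.sqrt_nonneg _, Real.sqrt_nonneg _,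
      Real.sqrt_nonneg _, Real.sqrt_nonneg _⟩
  obtain ⟨h5, h6, h7, h8, h9, h10⟩ := hnn
  have h4 : (pii + lam * pdd) ^ 2 ≤ (ti + lam * td) ^ 2 := by
    have hle : pii + lam * pdd ≤ ti + lam * td := by nlinarith
    exact pow_le_pow_left₀ (add_nonneg h9 (mul_nonneg hlam.le h10)) hle 2
  have hABlam : 2 * lam * (ti * td + ri * rd) ≤ 2 * lam * (A * B) :=
    mul_le_mul_of_nonneg_left hAB (by positivity)
  have hB2' : lam ^ 2 * B ^ 2 = lam ^ 2 * (td ^ 2 + rd ^ 2) := by rw [hB2]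
  nlinarith [h1, h4, hABlam, hA2, hB2']


end
end
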